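/- arXiv:2001.00639 — 9 statements merged into one kernel-verified Lean document; each statement's English description precedes it below -/
import Mathlib

section
/- Let M ⊆ V, u ∈ V, and δ ∈ (0,1). Let u_M ∈ M satisfy ‖u − u_M‖ ≤ ‖u − v‖ for all v ∈ M, fix sample points y_1,…,y_n ∈ Y, and let u_{M,n} ∈ M satisfy ‖u − u_{M,n}‖_n ≤ ‖u − v‖_n for all v ∈ M. Assume RIP({u_M} − M, δ) holds, where {u_M} − M := {u_M − v : v ∈ M}, and assume ‖u − u_M‖_n ≤ ‖u − u_M‖_{w,∞}. Then ‖u_M − u_{M,n}‖ ≤ (2/√(1−δ)) ‖u − u_M‖_{w,∞}. -/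
/-!
By RIP, `√(1 - δ) ‖u_M - u_{M,n}‖ ≤ ‖u_M - u_{M,n}‖ₙ`. The empirical best approximation is
quasi-optimal for the empirical seminorm: by the triangle inequality and minimality of `u_{M,n}`,
`‖u_M - u_{M,n}‖ₙ ≤ ‖u - u_M‖ₙ + ‖u - u_{M,n}‖ₙ ≤ 2 ‖u - u_M‖ₙ ≤ 2 ‖u - u_M‖_{w,∞}`.
-/

open MeasureTheory ENNReal

theorem Real.sqrt_sum_add_sq_le {ι : Type*} [Fintype ι] (a b : ι → ℝ) :
    √(∑ i, (a i + b i) ^ 2) ≤ √(∑ i, a i ^ 2) + √(∑ i, b i ^ 2) := by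
  simpa [EuclideanSpace.norm_eq] using
    norm_add_le (WithLp.toLp 2 a : EuclideanSpace ℝ ι) (WithLp.toLp 2 b)

theorem Real.sqrt_mul_le_of_mul_sq_le {c a b : ℝ} (hc : 0 ≤ c) (hb : 0 ≤ b)
    (h : c * a ^ 2 ≤ b ^ 2) : √c * a ≤ b :=
  (le_abs_self _).trans <| abs_le_of_sq_le_sq (by rwa [mul_pow, Real.sq_sqrt hc]) hb

theorem sqrt_sum_mul_sq_add_le {ι V : Type*} [Fintype ι] [Add V] {c : ι → ℝ}
    {p : ι → V → ℝ} (hc : ∀ i, 0 ≤ c i) (hp_nonneg : ∀ i v, 0 ≤ p i v)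
    (hp_add : ∀ i u v, p i (u + v) ≤ p i u + p i v) (u v : V) :
    √(∑ i, c i * p i (u + v) ^ 2) ≤
      √(∑ i, c i * p i u ^ 2) + √(∑ i, c i * p i v ^ 2) := by
  have hsq : ∀ i x, c i * p i x ^ 2 = (√(c i) * p i x) ^ 2 := fun i x => by
    rw [mul_pow, Real.sq_sqrt (hc i)]
  simp only [hsq]
  refine (Real.sqrt_le_sqrt <| Finset.sum_le_sum fun i _ => ?_).trans
    (Real.sqrt_sum_add_sq_le _ _)
  rw [← mul_add]
  exact pow_le_pow_left₀ (mul_nonneg (Real.sqrt_nonneg _) (hp_nonneg i _))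
    (mul_le_mul_of_nonneg_left (hp_add i u v) (Real.sqrt_nonneg _)) 2

theorem best_approx_sub_le_two_mul {V : Type*} [AddCommGroup V] {E : V → ℝ}
    (hE_add : ∀ a b, E (a + b) ≤ E a + E b) (hE_neg : ∀ a, E (-a) = E a)
    {M : Set V} {u uM uMn : V} (huM : uM ∈ M)
    (huMn_best : ∀ v ∈ M, E (u - uMn) ≤ E (u - v)) :
    E (uM - uMn) ≤ 2 * E (u - uM) :=
  calc E (uM - uMn) = E (-(u - uM) + (u - uMn)) := by congr 1; abel
    _ ≤ E (u - uM) + E (u - uMn) := by rw [← hE_neg (u - uM)]; exact hE_add _ _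
    _ ≤ 2 * E (u - uM) := by linarith [huMn_best uM huM]

theorem empirical_projection_error_winf_general
    {Y : Type*}
    {V : Type*} [AddCommGroup V] [Module ℝ V]
    -- the family of seminorms
    (nrm : Y → V → ℝ)
    (hnrm_nonneg : ∀ y v, 0 ≤ nrm y v)
    (hnrm_smul : ∀ (y : Y) (a : ℝ) (v : V), nrm y (a • v) = |a| * nrm y v)
    (hnrm_add : ∀ (y : Y) (u v : V), nrm y (u + v) ≤ nrm y u + nrm y v)
    -- the norm ‖·‖
    (Nrm : V → ℝ)
    -- the weight function
    (w : Y → ℝ) (hw_pos : ∀ y, 0 < w y)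
    -- the samples and the empirical seminorm
    (n : ℕ) (ys : Fin n → Y)
    (empn : V → ℝ)
    (hempn : ∀ v, empn v = Real.sqrt ((n : ℝ)⁻¹ * ∑ i, w (ys i) * nrm (ys i) v ^ 2))
    -- the (w,∞)-norm
    (Wnorm : V → ℝ)
    -- the model class, the target and the (empirical) best approximations
    (M : Set V) (u : V) (δ : ℝ) (hδ1 : δ < 1)
    (uM : V) (huM : uM ∈ M)
    (uMn : V) (huMn : uMn ∈ M) (huMn_best : ∀ v ∈ M, empn (u - uMn) ≤ empn (u - v))
    -- RIP({u_M} − M, δ)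
    (hRIP : ∀ v ∈ M,
      (1 - δ) * Nrm (uM - v) ^ 2 ≤ empn (uM - v) ^ 2 ∧
      empn (uM - v) ^ 2 ≤ (1 + δ) * Nrm (uM - v) ^ 2)
    -- ‖u − u_M‖ₙ ≤ ‖u − u_M‖_{w,∞} (holds for almost every sample tuple)
    (hbound : empn (u - uM) ≤ Wnorm (u - uM)) :
    Nrm (uM - uMn) ≤ 2 / Real.sqrt (1 - δ) * Wnorm (u - uM) := by
  have hempn' : ∀ v, empn v = √(∑ i, ((n : ℝ)⁻¹ * w (ys i)) * nrm (ys i) v ^ 2) :=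
    fun v => by simp only [hempn, Finset.mul_sum, mul_assoc]
  have hempn_add : ∀ a b, empn (a + b) ≤ empn a + empn b := fun a b => by
    simp only [hempn']
    exact sqrt_sum_mul_sq_add_le (fun i => by have := hw_pos (ys i); positivity)
      (fun i => hnrm_nonneg (ys i)) (fun i => hnrm_add (ys i)) a b
  have hempn_neg : ∀ a, empn (-a) = empn a := fun a => by
    have hnrm_neg : ∀ y, nrm y (-a) = nrm y a := fun y => by simpa using hnrm_smul y (-1) a
    simp only [hempn, hnrm_neg]
  have hquasi : empn (uM - uMn) ≤ 2 * empn (u - uM) :=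
    best_approx_sub_le_two_mul hempn_add hempn_neg huM huMn_best
  have hlower : √(1 - δ) * Nrm (uM - uMn) ≤ empn (uM - uMn) :=
    Real.sqrt_mul_le_of_mul_sq_le (by linarith) (by rw [hempn]; positivity) (hRIP uMn huMn).1
  rw [div_mul_eq_mul_div, le_div_iff₀ (Real.sqrt_pos.2 (by linarith)), mul_comm]
  linarith

/-- (Empirical projection error, first bound of Theorem 3.9.)
If RIP({u_M} − M, δ) holds and `‖u − u_M‖ₙ ≤ ‖u − u_M‖_{w,∞}`, then
`‖u_M − u_{M,n}‖ ≤ (2/√(1−δ)) ‖u − u_M‖_{w,∞}`. -/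
theorem empirical_projection_error_winf
    {Y : Type*} [MeasurableSpace Y] (ρ : Measure Y) [IsProbabilityMeasure ρ]
    {V : Type*} [AddCommGroup V] [Module ℝ V]
    -- the family of seminorms
    (nrm : Y → V → ℝ)
    (hnrm_nonneg : ∀ y v, 0 ≤ nrm y v)
    (hnrm_smul : ∀ (y : Y) (a : ℝ) (v : V), nrm y (a • v) = |a| * nrm y v)
    (hnrm_add : ∀ (y : Y) (u v : V), nrm y (u + v) ≤ nrm y u + nrm y v)
    (hnrm_meas : ∀ v, Measurable fun y => nrm y v)
    (hnrm_int : ∀ v, Integrable (fun y => nrm y v ^ 2) ρ)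
    -- the norm ‖·‖
    (Nrm : V → ℝ) (hNrm : ∀ v, Nrm v = Real.sqrt (∫ y, nrm y v ^ 2 ∂ρ))
    (hNrm_norm : ∀ v, Nrm v = 0 → v = 0)
    -- the weight function
    (w : Y → ℝ) (hw_meas : Measurable w) (hw_pos : ∀ y, 0 < w y)
    (hw_int : ∫ y, (w y)⁻¹ ∂ρ = 1)
    -- the samples and the empirical seminorm
    (n : ℕ) (hn : 0 < n) (ys : Fin n → Y)
    (empn : V → ℝ)
    (hempn : ∀ v, empn v = Real.sqrt ((n : ℝ)⁻¹ * ∑ i, w (ys i) * nrm (ys i) v ^ 2))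
    -- the (w,∞)-norm
    (Wnorm : V → ℝ)
    (hWnorm : ∀ v, Wnorm v = Real.sqrt (essSup (fun y => w y * nrm y v ^ 2) ρ))
    -- the model class, the target and the (empirical) best approximations
    (M : Set V) (u : V) (δ : ℝ) (hδ0 : 0 < δ) (hδ1 : δ < 1)
    (uM : V) (huM : uM ∈ M) (huM_best : ∀ v ∈ M, Nrm (u - uM) ≤ Nrm (u - v))
    (uMn : V) (huMn : uMn ∈ M) (huMn_best : ∀ v ∈ M, empn (u - uMn) ≤ empn (u - v))
    -- RIP({u_M} − M, δ)
    (hRIP : ∀ v ∈ M,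
      (1 - δ) * Nrm (uM - v) ^ 2 ≤ empn (uM - v) ^ 2 ∧
      empn (uM - v) ^ 2 ≤ (1 + δ) * Nrm (uM - v) ^ 2)
    -- ‖u − u_M‖ₙ ≤ ‖u − u_M‖_{w,∞} (holds for almost every sample tuple)
    (hbound : empn (u - uM) ≤ Wnorm (u - uM)) :
    Nrm (uM - uMn) ≤ 2 / Real.sqrt (1 - δ) * Wnorm (u - uM) :=
  empirical_projection_error_winf_general nrm hnrm_nonneg hnrm_smul hnrm_add Nrm w hw_pos n ys empn
    hempn Wnorm M u δ hδ1 uM huM uMn huMn huMn_best hRIP hbound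
end

section
/- Let M ⊆ V, u ∈ V, and δ ∈ (0,1). Let u_M ∈ M satisfy ‖u − u_M‖ ≤ ‖u − v‖ for all v ∈ M, fix sample points y_1,…,y_n ∈ Y, and let u_{M,n} ∈ M satisfy ‖u − u_{M,n}‖_n ≤ ‖u − v‖_n for all v ∈ M. Assume both RIP({u_M} − M, δ) and RIP({u − u_M}, δ) hold, where {u_M} − M := {u_M − v : v ∈ M}. Then ‖u_M − u_{M,n}‖ ≤ 2√((1+δ)/(1−δ)) ‖u − u_M‖, and consequently ‖u − u_M‖ ≤ ‖u − u_{M,n}‖ ≤ (1 + 2√((1+δ)/(1−δ))) ‖u − u_M‖. -/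
/-!
Both `‖·‖` and `‖·‖ₙ` are `L²`-averages of the family `|·|_y`, the latter with respect to the
weighted empirical measure `n⁻¹ ∑ᵢ w(yᵢ) δ_{yᵢ}`; hence both are seminorms. Since
`u_M − u_{M,n} ∈ {u_M} − M`, the triangle inequality for `‖·‖ₙ` and the empirical optimality of
`u_{M,n}` give
`(1 − δ)‖u_M − u_{M,n}‖² ≤ ‖u_M − u_{M,n}‖ₙ² ≤ 4‖u − u_M‖ₙ² ≤ 4(1 + δ)‖u − u_M‖²`.
The remaining bounds are the optimality of `u_M` and the triangle inequality for `‖·‖`.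
-/

open MeasureTheory ENNReal

lemma MeasureTheory.lpNorm_two_eq_sqrt_integral_sq {Y : Type*} [MeasurableSpace Y]
    {μ : Measure Y} {f : Y → ℝ} (hf : AEStronglyMeasurable f μ) :
    lpNorm f 2 μ = √(∫ y, f y ^ 2 ∂μ) := by
  rw [lpNorm_eq_integral_norm_rpow_toReal two_ne_zero ofNat_ne_top hf, Real.sqrt_eq_rpow]
  simp [Real.norm_eq_abs]

namespace Seminorm

variable {Y 𝕜 V : Type*} [MeasurableSpace Y] [AddCommGroup V]

section lpAverage

variable [NormedField 𝕜] [Module 𝕜 V]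

noncomputable def lpAverage (μ : Measure Y) (r : ℝ≥0∞) [Fact (1 ≤ r)] (p : Y → Seminorm 𝕜 V)
    (hp : ∀ v, MemLp (fun y => p y v) r μ) : Seminorm 𝕜 V :=
  Seminorm.of (fun v => lpNorm (fun y => p y v) r μ)
    (fun a b => calc
      lpNorm (fun y => p y (a + b)) r μ ≤ lpNorm ((fun y => p y a) + fun y => p y b) r μ :=
        lpNorm_mono_real ((hp a).add (hp b)) fun y => by
          rw [Real.norm_of_nonneg (apply_nonneg _ _)]
          exact map_add_le_add _ _ _
      _ ≤ _ := lpNorm_add_le (hp a) Fact.out)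
    (fun c v => by
      simp only [map_smul_eq_mul]
      exact (lpNorm_const_smul ‖c‖ (fun y => p y v) μ).trans (by simp))

lemma lpAverage_two_apply (μ : Measure Y) (p : Y → Seminorm 𝕜 V)
    (hp : ∀ v, MemLp (fun y => p y v) 2 μ) (v : V) :
    lpAverage μ 2 p hp v = √(∫ y, p y v ^ 2 ∂μ) :=
  lpNorm_two_eq_sqrt_integral_sq (hp v).aestronglyMeasurable

end lpAverage

variable [SeminormedRing 𝕜] [Module 𝕜 V]

theorem map_sub_le_of_rip (p q : Seminorm 𝕜 V) {u uM uMn : V} {δ : ℝ} (hδ : δ < 1)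
    (hbest : q (u - uMn) ≤ q (u - uM))
    (hlower : (1 - δ) * p (uM - uMn) ^ 2 ≤ q (uM - uMn) ^ 2)
    (hupper : q (u - uM) ^ 2 ≤ (1 + δ) * p (u - uM) ^ 2) :
    p (uM - uMn) ≤ 2 * √((1 + δ) / (1 - δ)) * p (u - uM) := by
  have hq : q (uM - uMn) ≤ 2 * q (u - uM) := by
    linarith [le_map_sub_add_map_sub q uM u uMn, map_sub_rev q uM u]
  have hsq : p (uM - uMn) ^ 2 ≤ 2 ^ 2 * ((1 + δ) / (1 - δ)) * p (u - uM) ^ 2 := by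
    rw [show 2 ^ 2 * ((1 + δ) / (1 - δ)) * p (u - uM) ^ 2
        = 4 * (1 + δ) * p (u - uM) ^ 2 / (1 - δ) by ring, le_div_iff₀ (by linarith)]
    nlinarith [pow_le_pow_left₀ (apply_nonneg q _) hq 2]
  calc p (uM - uMn) ≤ √(2 ^ 2 * ((1 + δ) / (1 - δ)) * p (u - uM) ^ 2) :=
        Real.le_sqrt_of_sq_le hsq
    _ = 2 * √((1 + δ) / (1 - δ)) * p (u - uM) := by
        rw [Real.sqrt_mul' _ (sq_nonneg _), Real.sqrt_mul (by positivity),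
          Real.sqrt_sq two_pos.le, Real.sqrt_sq (apply_nonneg p _)]

end Seminorm

noncomputable def empiricalMeasure {Y : Type*} [MeasurableSpace Y] (w : Y → ℝ) {n : ℕ}
    (ys : Fin n → Y) : Measure Y :=
  ∑ i, ENNReal.ofReal (w (ys i) / n) • Measure.dirac (ys i)

section empiricalMeasure

variable {Y : Type*} [MeasurableSpace Y] {w : Y → ℝ} {n : ℕ} {ys : Fin n → Y} {f : Y → ℝ}

lemma integrable_empiricalMeasure (hf : StronglyMeasurable f) :
    Integrable f (empiricalMeasure w ys) :=
  integrable_finsetSum_measure.2 fun _ _ =>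
    (integrable_dirac' hf enorm_lt_top).smul_measure ofReal_ne_top

lemma integral_empiricalMeasure (hw : ∀ i, 0 ≤ w (ys i)) (hf : StronglyMeasurable f) :
    ∫ y, f y ∂empiricalMeasure w ys = (n : ℝ)⁻¹ * ∑ i, w (ys i) * f (ys i) := by
  rw [empiricalMeasure, integral_finsetSum_measure fun _ _ =>
    (integrable_dirac' hf enorm_lt_top).smul_measure ofReal_ne_top, Finset.mul_sum]
  refine Finset.sum_congr rfl fun i _ => ?_
  rw [integral_smul_measure, integral_dirac' _ _ hf, toReal_ofReal (by have := hw i; positivity),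
    smul_eq_mul]
  ring

end empiricalMeasure

theorem empirical_projection_error_general
    {Y : Type*} [MeasurableSpace Y] (ρ : Measure Y)
    {V : Type*} [AddCommGroup V] [Module ℝ V]
    -- the family of seminorms
    (nrm : Y → V → ℝ)
    (hnrm_smul : ∀ (y : Y) (a : ℝ) (v : V), nrm y (a • v) = |a| * nrm y v)
    (hnrm_add : ∀ (y : Y) (u v : V), nrm y (u + v) ≤ nrm y u + nrm y v)
    (hnrm_meas : ∀ v, Measurable fun y => nrm y v)
    (hnrm_int : ∀ v, Integrable (fun y => nrm y v ^ 2) ρ)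
    -- the norm ‖·‖
    (Nrm : V → ℝ) (hNrm : ∀ v, Nrm v = Real.sqrt (∫ y, nrm y v ^ 2 ∂ρ))
    -- the weight function
    (w : Y → ℝ) (hw_pos : ∀ y, 0 < w y)
    -- the samples and the empirical seminorm
    (n : ℕ) (ys : Fin n → Y)
    (empn : V → ℝ)
    (hempn : ∀ v, empn v = Real.sqrt ((n : ℝ)⁻¹ * ∑ i, w (ys i) * nrm (ys i) v ^ 2))
    -- the model class, the target and the (empirical) best approximations
    (M : Set V) (u : V) (δ : ℝ) (hδ1 : δ < 1)
    (uM : V) (huM : uM ∈ M) (huM_best : ∀ v ∈ M, Nrm (u - uM) ≤ Nrm (u - v))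
    (uMn : V) (huMn : uMn ∈ M) (huMn_best : ∀ v ∈ M, empn (u - uMn) ≤ empn (u - v))
    -- RIP({u_M} − M, δ)
    (hRIP : ∀ v ∈ M,
      (1 - δ) * Nrm (uM - v) ^ 2 ≤ empn (uM - v) ^ 2 ∧
      empn (uM - v) ^ 2 ≤ (1 + δ) * Nrm (uM - v) ^ 2)
    -- RIP({u − u_M}, δ)
    (hRIP2 : (1 - δ) * Nrm (u - uM) ^ 2 ≤ empn (u - uM) ^ 2 ∧
      empn (u - uM) ^ 2 ≤ (1 + δ) * Nrm (u - uM) ^ 2) :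
    Nrm (uM - uMn) ≤ 2 * Real.sqrt ((1 + δ) / (1 - δ)) * Nrm (u - uM) ∧
    Nrm (u - uM) ≤ Nrm (u - uMn) ∧
    Nrm (u - uMn) ≤ (1 + 2 * Real.sqrt ((1 + δ) / (1 - δ))) * Nrm (u - uM) := by
  let P : Y → Seminorm ℝ V := fun y =>
    Seminorm.of (nrm y) (hnrm_add y) fun a v => by rw [hnrm_smul, Real.norm_eq_abs]
  have hP : ∀ v, StronglyMeasurable fun y => P y v := fun v => (hnrm_meas v).stronglyMeasurable
  have hPsq : ∀ v, StronglyMeasurable fun y => P y v ^ 2 := fun v => (hP v).pow 2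
  obtain ⟨p, rfl⟩ : ∃ p : Seminorm ℝ V, ⇑p = Nrm :=
    ⟨.lpAverage ρ 2 P fun v =>
      (memLp_two_iff_integrable_sq (hP v).aestronglyMeasurable).2 (hnrm_int v),
      funext fun v => by rw [Seminorm.lpAverage_two_apply, hNrm]; rfl⟩
  obtain ⟨q, rfl⟩ : ∃ q : Seminorm ℝ V, ⇑q = empn :=
    ⟨.lpAverage (empiricalMeasure w ys) 2 P fun v =>
      (memLp_two_iff_integrable_sq (hP v).aestronglyMeasurable).2
        (integrable_empiricalMeasure (hPsq v)),
      funext fun v => by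
        rw [Seminorm.lpAverage_two_apply, integral_empiricalMeasure (fun i => (hw_pos _).le)
          (hPsq v), hempn]
        rfl⟩
  have hclose := p.map_sub_le_of_rip q hδ1 (huMn_best uM huM) (hRIP uMn huMn).1 hRIP2.2
  refine ⟨hclose, huM_best uMn huMn, ?_⟩
  calc p (u - uMn) ≤ p (u - uM) + p (uM - uMn) := le_map_sub_add_map_sub p u uM uMn
    _ ≤ (1 + 2 * √((1 + δ) / (1 - δ))) * p (u - uM) := by linarith

/-- (Empirical projection error, Theorem 3.9.) If RIP({u_M} − M, δ)
and RIP({u − u_M}, δ) hold, then `‖u_M − u_{M,n}‖ ≤ 2√((1+δ)/(1−δ)) ‖u − u_M‖` and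
consequently `‖u − u_M‖ ≤ ‖u − u_{M,n}‖ ≤ (1 + 2√((1+δ)/(1−δ))) ‖u − u_M‖`. -/
theorem empirical_projection_error
    {Y : Type*} [MeasurableSpace Y] (ρ : Measure Y) [IsProbabilityMeasure ρ]
    {V : Type*} [AddCommGroup V] [Module ℝ V]
    -- the family of seminorms
    (nrm : Y → V → ℝ)
    (hnrm_nonneg : ∀ y v, 0 ≤ nrm y v)
    (hnrm_smul : ∀ (y : Y) (a : ℝ) (v : V), nrm y (a • v) = |a| * nrm y v)
    (hnrm_add : ∀ (y : Y) (u v : V), nrm y (u + v) ≤ nrm y u + nrm y v)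
    (hnrm_meas : ∀ v, Measurable fun y => nrm y v)
    (hnrm_int : ∀ v, Integrable (fun y => nrm y v ^ 2) ρ)
    -- the norm ‖·‖
    (Nrm : V → ℝ) (hNrm : ∀ v, Nrm v = Real.sqrt (∫ y, nrm y v ^ 2 ∂ρ))
    (hNrm_norm : ∀ v, Nrm v = 0 → v = 0)
    -- the weight function
    (w : Y → ℝ) (hw_meas : Measurable w) (hw_pos : ∀ y, 0 < w y)
    (hw_int : ∫ y, (w y)⁻¹ ∂ρ = 1)
    -- the samples and the empirical seminorm
    (n : ℕ) (hn : 0 < n) (ys : Fin n → Y)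
    (empn : V → ℝ)
    (hempn : ∀ v, empn v = Real.sqrt ((n : ℝ)⁻¹ * ∑ i, w (ys i) * nrm (ys i) v ^ 2))
    -- the model class, the target and the (empirical) best approximations
    (M : Set V) (u : V) (δ : ℝ) (hδ0 : 0 < δ) (hδ1 : δ < 1)
    (uM : V) (huM : uM ∈ M) (huM_best : ∀ v ∈ M, Nrm (u - uM) ≤ Nrm (u - v))
    (uMn : V) (huMn : uMn ∈ M) (huMn_best : ∀ v ∈ M, empn (u - uMn) ≤ empn (u - v))
    -- RIP({u_M} − M, δ)
    (hRIP : ∀ v ∈ M,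
      (1 - δ) * Nrm (uM - v) ^ 2 ≤ empn (uM - v) ^ 2 ∧
      empn (uM - v) ^ 2 ≤ (1 + δ) * Nrm (uM - v) ^ 2)
    -- RIP({u − u_M}, δ)
    (hRIP2 : (1 - δ) * Nrm (u - uM) ^ 2 ≤ empn (u - uM) ^ 2 ∧
      empn (u - uM) ^ 2 ≤ (1 + δ) * Nrm (u - uM) ^ 2) :
    Nrm (uM - uMn) ≤ 2 * Real.sqrt ((1 + δ) / (1 - δ)) * Nrm (u - uM) ∧
    Nrm (u - uM) ≤ Nrm (u - uMn) ∧
    Nrm (u - uMn) ≤ (1 + 2 * Real.sqrt ((1 + δ) / (1 - δ))) * Nrm (u - uM) :=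
  empirical_projection_error_general ρ nrm hnrm_smul hnrm_add hnrm_meas hnrm_int Nrm hNrm w hw_pos n
    ys empn hempn M u δ hδ1 uM huM huM_best uMn huMn huMn_best hRIP hRIP2
end

section
/- Let M ⊆ V, u ∈ V, δ ∈ (0,1), ε > 0, and let η : Y → ℝ be measurable. Fix sample points y_1,…,y_n ∈ Y with w(y_i) η(y_i)² ≤ (1/4)(1−δ)ε² for each i, and define the perturbed empirical seminorm ‖v‖_{η,n} := ((1/n) Σ_{i=1}^n w(y_i)(|v|_{y_i} + η(y_i))²)^{1/2}. Let u_M ∈ M satisfy ‖u − u_M‖ ≤ ‖u − v‖ for all v ∈ M and let u_{M,n,η} ∈ M satisfy ‖u − u_{M,n,η}‖_{η,n} ≤ ‖u − v‖_{η,n} for all v ∈ M. If RIP({u_M} − M, δ) holds and ‖u − u_M‖_n ≤ ‖u − u_M‖_{w,∞}, then ‖u_M − u_{M,n,η}‖ ≤ (2/√(1−δ)) ‖u − u_M‖_{w,∞} + ε. If in addition RIP({u − u_M}, δ) holds, then ‖u_M − u_{M,n,η}‖ ≤ 2√((1+δ)/(1−δ)) ‖u − u_M‖ + ε. -/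
open MeasureTheory ENNReal

/-!
On the samples, `‖·‖ₙ` and `‖·‖_{η,n}` are weighted Euclidean norms of the vectors
`(|v|_{y_i})_i` and `(|v|_{y_i} + η(y_i))_i`, so the noise `η` shifts the empirical norm by at most
its own empirical norm `‖η‖ₙ ≤ √(1-δ) ε / 2`. Hence the perturbed minimality of `u_{M,n,η}` gives
`‖u - u_{M,n,η}‖ₙ ≤ ‖u - u_M‖ₙ + 2 ‖η‖ₙ`, and with the triangle inequality
`‖u_M - u_{M,n,η}‖ₙ ≤ 2 ‖u - u_M‖ₙ + √(1-δ) ε`. The lower RIP bound on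
`u_M - u_{M,n,η} ∈ {u_M} - M` turns this into a bound on `‖u_M - u_{M,n,η}‖`. The two conclusions
then follow by bounding `‖u - u_M‖ₙ` by `‖u - u_M‖_{w,∞}`, or by `√(1+δ) ‖u - u_M‖` via RIP.
-/

namespace Real

theorem sqrt_mul_abs_le_of_mul_sq_le {a x y : ℝ} (hy : 0 ≤ y) (h : a * x ^ 2 ≤ y ^ 2) :
    √a * |x| ≤ y := by
  calc √a * |x| = √(a * x ^ 2) := by rw [sqrt_mul' a (sq_nonneg x), sqrt_sq_eq_abs]
    _ ≤ √(y ^ 2) := sqrt_le_sqrt h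
    _ = y := sqrt_sq hy

theorem le_sqrt_mul_abs_of_sq_le_mul {a x y : ℝ} (h : y ^ 2 ≤ a * x ^ 2) : y ≤ √a * |x| := by
  calc y ≤ √(y ^ 2) := by rw [sqrt_sq_eq_abs]; exact le_abs_self y
    _ ≤ √(a * x ^ 2) := sqrt_le_sqrt h
    _ = √a * |x| := by rw [sqrt_mul' a (sq_nonneg x), sqrt_sq_eq_abs]

end Real

noncomputable def empiricalNorm {n : ℕ} (w f : Fin n → ℝ) : ℝ :=
  √((n : ℝ)⁻¹ * ∑ i, w i * f i ^ 2)

section empiricalNorm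

variable {n : ℕ} {w : Fin n → ℝ}

theorem empiricalNorm_eq_norm_toLp (hw : ∀ i, 0 ≤ w i) (f : Fin n → ℝ) :
    empiricalNorm w f =
      ‖(WithLp.toLp 2 ((fun i => √((n : ℝ)⁻¹ * w i)) * f) : EuclideanSpace ℝ (Fin n))‖ := by
  rw [empiricalNorm, EuclideanSpace.norm_eq, Finset.mul_sum]
  congr 1
  refine Finset.sum_congr rfl fun i _ => ?_
  rw [WithLp.ofLp_toLp, Pi.mul_apply, Real.norm_eq_abs, sq_abs, mul_pow,
    Real.sq_sqrt (mul_nonneg (by positivity) (hw i))]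
  ring

theorem empiricalNorm_add_le (hw : ∀ i, 0 ≤ w i) (f g : Fin n → ℝ) :
    empiricalNorm w (f + g) ≤ empiricalNorm w f + empiricalNorm w g := by
  rw [empiricalNorm_eq_norm_toLp hw, empiricalNorm_eq_norm_toLp hw,
    empiricalNorm_eq_norm_toLp hw, mul_add, WithLp.toLp_add]
  exact norm_add_le _ _

theorem empiricalNorm_neg (f : Fin n → ℝ) : empiricalNorm w (-f) = empiricalNorm w f := by
  simp only [empiricalNorm, Pi.neg_apply, neg_sq]

theorem empiricalNorm_mono (hw : ∀ i, 0 ≤ w i) {f g : Fin n → ℝ} (hf : 0 ≤ f) (hfg : f ≤ g) :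
    empiricalNorm w f ≤ empiricalNorm w g := by
  refine Real.sqrt_le_sqrt (mul_le_mul_of_nonneg_left (Finset.sum_le_sum fun i _ => ?_) ?_)
  · exact mul_le_mul_of_nonneg_left (pow_le_pow_left₀ (hf i) (hfg i) 2) (hw i)
  · positivity

theorem empiricalNorm_le_of_forall_mul_sq_le {f : Fin n → ℝ} {K : ℝ} (hK : 0 ≤ K)
    (h : ∀ i, w i * f i ^ 2 ≤ K ^ 2) :
    empiricalNorm w f ≤ K := by
  refine (Real.sqrt_le_sqrt ?_).trans_eq (Real.sqrt_sq hK)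
  calc (n : ℝ)⁻¹ * ∑ i, w i * f i ^ 2 ≤ (n : ℝ)⁻¹ * (n * K ^ 2) := by
        gcongr
        simpa using Finset.sum_le_sum fun i (_ : i ∈ Finset.univ) => h i
    _ ≤ K ^ 2 := by
        rcases n.eq_zero_or_pos with rfl | hn
        · simpa using sq_nonneg K
        · rw [inv_mul_cancel_left₀ (by positivity)]

theorem empiricalNorm_le_add_two_mul_of_add_le {f g e : Fin n → ℝ} (hw : ∀ i, 0 ≤ w i)
    (h : empiricalNorm w (f + e) ≤ empiricalNorm w (g + e)) :
    empiricalNorm w f ≤ empiricalNorm w g + 2 * empiricalNorm w e := by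
  have hf : empiricalNorm w f ≤ empiricalNorm w (f + e) + empiricalNorm w e := by
    simpa only [add_neg_cancel_right, empiricalNorm_neg] using
      empiricalNorm_add_le hw (f + e) (-e)
  linarith [empiricalNorm_add_le hw g e]

theorem empiricalNorm_seminorm_sub_le_of_perturbed_le {V : Type*} [AddCommGroup V] [Module ℝ V]
    (hw : ∀ i, 0 ≤ w i) (p : Fin n → Seminorm ℝ V) (η : Fin n → ℝ) {u a b : V}
    (h : empiricalNorm w (fun i => p i (u - b) + η i) ≤
      empiricalNorm w (fun i => p i (u - a) + η i)) :
    empiricalNorm w (fun i => p i (a - b)) ≤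
      2 * empiricalNorm w (fun i => p i (u - a)) + 2 * empiricalNorm w η := by
  have htri : empiricalNorm w (fun i => p i (a - b)) ≤
      empiricalNorm w (fun i => p i (u - b)) + empiricalNorm w (fun i => p i (u - a)) := by
    refine (empiricalNorm_mono hw (fun i => apply_nonneg _ _) fun i => ?_).trans
      (empiricalNorm_add_le hw _ _)
    have hab : (u - b) - (u - a) = a - b := sub_sub_sub_cancel_left b a u
    have := map_sub_le_add (p i) (u - b) (u - a)
    rw [hab] at this
    exact this
  linarith [empiricalNorm_le_add_two_mul_of_add_le (f := fun i => p i (u - b)) hw h]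

end empiricalNorm
theorem empirical_projection_error_noisy_general
    {Y : Type*} [MeasurableSpace Y] (ρ : Measure Y)
    {V : Type*} [AddCommGroup V] [Module ℝ V]
    -- the family of seminorms
    (nrm : Y → V → ℝ)
    (hnrm_smul : ∀ (y : Y) (a : ℝ) (v : V), nrm y (a • v) = |a| * nrm y v)
    (hnrm_add : ∀ (y : Y) (u v : V), nrm y (u + v) ≤ nrm y u + nrm y v)
    -- the norm ‖·‖
    (Nrm : V → ℝ) (hNrm : ∀ v, Nrm v = Real.sqrt (∫ y, nrm y v ^ 2 ∂ρ))
    -- the weight function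
    (w : Y → ℝ) (hw_pos : ∀ y, 0 < w y)
    -- the samples and the empirical seminorm
    (n : ℕ) (ys : Fin n → Y)
    (empn : V → ℝ)
    (hempn : ∀ v, empn v = Real.sqrt ((n : ℝ)⁻¹ * ∑ i, w (ys i) * nrm (ys i) v ^ 2))
    -- the (w,∞)-norm
    (Wnorm : V → ℝ)
    (M : Set V) (u : V) (δ : ℝ) (hδ1 : δ < 1) (ε : ℝ) (hε : 0 < ε)
    -- the noise and the perturbed empirical seminorm
    (η : Y → ℝ)
    (hη : ∀ i, w (ys i) * η (ys i) ^ 2 ≤ 1 / 4 * (1 - δ) * ε ^ 2)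
    (empη : V → ℝ)
    (hempη : ∀ v, empη v =
      Real.sqrt ((n : ℝ)⁻¹ * ∑ i, w (ys i) * (nrm (ys i) v + η (ys i)) ^ 2))
    -- the best approximation and the perturbed empirical best approximation
    (uM : V) (huM : uM ∈ M)
    (uMnη : V) (huMnη : uMnη ∈ M)
    (huMnη_best : ∀ v ∈ M, empη (u - uMnη) ≤ empη (u - v))
    -- RIP({u_M} − M, δ)
    (hRIP : ∀ v ∈ M,
      (1 - δ) * Nrm (uM - v) ^ 2 ≤ empn (uM - v) ^ 2 ∧
      empn (uM - v) ^ 2 ≤ (1 + δ) * Nrm (uM - v) ^ 2)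
    -- ‖u − u_M‖ₙ ≤ ‖u − u_M‖_{w,∞} (holds for almost every sample tuple)
    (hbound : empn (u - uM) ≤ Wnorm (u - uM)) :
    Nrm (uM - uMnη) ≤ 2 / Real.sqrt (1 - δ) * Wnorm (u - uM) + ε ∧
    (((1 - δ) * Nrm (u - uM) ^ 2 ≤ empn (u - uM) ^ 2 ∧
        empn (u - uM) ^ 2 ≤ (1 + δ) * Nrm (u - uM) ^ 2) →
      Nrm (uM - uMnη) ≤ 2 * Real.sqrt ((1 + δ) / (1 - δ)) * Nrm (u - uM) + ε) := by
  let p : Y → Seminorm ℝ V := fun y =>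
    Seminorm.of (nrm y) (hnrm_add y) fun a v => by rw [hnrm_smul, Real.norm_eq_abs]
  have hp : ∀ y v, p y v = nrm y v := fun _ _ => rfl
  have hempn' : ∀ v, empn v = empiricalNorm (fun i => w (ys i)) (fun i => nrm (ys i) v) := hempn
  have hempη' : ∀ v, empη v =
      empiricalNorm (fun i => w (ys i)) (fun i => nrm (ys i) v + η (ys i)) := hempη
  have hw : ∀ i, 0 ≤ w (ys i) := fun i => (hw_pos (ys i)).le
  have hδ : 0 < 1 - δ := sub_pos.2 hδ1
  have hnoise : empiricalNorm (fun i => w (ys i)) (fun i => η (ys i)) ≤ √(1 - δ) * ε / 2 := by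
    refine empiricalNorm_le_of_forall_mul_sq_le (by positivity) fun i => (hη i).trans_eq ?_
    rw [div_pow, mul_pow, Real.sq_sqrt hδ.le]
    ring
  have hemp : empn (uM - uMnη) ≤ 2 * empn (u - uM) + √(1 - δ) * ε := by
    have h := empiricalNorm_seminorm_sub_le_of_perturbed_le hw (fun i => p (ys i))
      (fun i => η (ys i)) (u := u) (a := uM) (b := uMnη)
      (by simpa only [hp, hempη'] using huMnη_best uM huM)
    simp only [hp] at h
    rw [hempn', hempn']
    linarith
  have hlow : √(1 - δ) * Nrm (uM - uMnη) ≤ empn (uM - uMnη) :=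
    (mul_le_mul_of_nonneg_left (le_abs_self _) (Real.sqrt_nonneg _)).trans
      (Real.sqrt_mul_abs_le_of_mul_sq_le (by rw [hempn]; positivity) (hRIP uMnη huMnη).1)
  have hmain : Nrm (uM - uMnη) ≤ 2 / √(1 - δ) * empn (u - uM) + ε := by
    have hs : 0 < √(1 - δ) := Real.sqrt_pos.2 hδ
    rw [div_mul_eq_mul_div, div_add' _ _ _ hs.ne', le_div_iff₀ hs]
    linarith
  refine ⟨hmain.trans (by gcongr), fun hRIP' => hmain.trans ?_⟩
  have hE : empn (u - uM) ≤ √(1 + δ) * Nrm (u - uM) := by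
    have hN : 0 ≤ Nrm (u - uM) := (hNrm _).symm ▸ Real.sqrt_nonneg _
    simpa only [abs_of_nonneg hN] using Real.le_sqrt_mul_abs_of_sq_le_mul hRIP'.2
  calc 2 / √(1 - δ) * empn (u - uM) + ε ≤ 2 / √(1 - δ) * (√(1 + δ) * Nrm (u - uM)) + ε := by
        gcongr
    _ = 2 * √((1 + δ) / (1 - δ)) * Nrm (u - uM) + ε := by
        rw [Real.sqrt_div' _ hδ.le]
        ring

/-- (Reconstruction with noise, Remark 3.10.) With the perturbed
empirical seminorm `‖v‖_{η,n}` and noise bound `w(y_i) η(y_i)² ≤ (1/4)(1−δ)ε²`,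
if RIP({u_M} − M, δ) holds then `‖u_M − u_{M,n,η}‖ ≤ (2/√(1−δ)) ‖u − u_M‖_{w,∞} + ε`;
if additionally RIP({u − u_M}, δ) holds then
`‖u_M − u_{M,n,η}‖ ≤ 2√((1+δ)/(1−δ)) ‖u − u_M‖ + ε`. -/
theorem empirical_projection_error_noisy
    {Y : Type*} [MeasurableSpace Y] (ρ : Measure Y) [IsProbabilityMeasure ρ]
    {V : Type*} [AddCommGroup V] [Module ℝ V]
    -- the family of seminorms
    (nrm : Y → V → ℝ)
    (hnrm_nonneg : ∀ y v, 0 ≤ nrm y v)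
    (hnrm_smul : ∀ (y : Y) (a : ℝ) (v : V), nrm y (a • v) = |a| * nrm y v)
    (hnrm_add : ∀ (y : Y) (u v : V), nrm y (u + v) ≤ nrm y u + nrm y v)
    (hnrm_meas : ∀ v, Measurable fun y => nrm y v)
    (hnrm_int : ∀ v, Integrable (fun y => nrm y v ^ 2) ρ)
    -- the norm ‖·‖
    (Nrm : V → ℝ) (hNrm : ∀ v, Nrm v = Real.sqrt (∫ y, nrm y v ^ 2 ∂ρ))
    (hNrm_norm : ∀ v, Nrm v = 0 → v = 0)
    -- the weight function
    (w : Y → ℝ) (hw_meas : Measurable w) (hw_pos : ∀ y, 0 < w y)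
    (hw_int : ∫ y, (w y)⁻¹ ∂ρ = 1)
    -- the samples and the empirical seminorm
    (n : ℕ) (hn : 0 < n) (ys : Fin n → Y)
    (empn : V → ℝ)
    (hempn : ∀ v, empn v = Real.sqrt ((n : ℝ)⁻¹ * ∑ i, w (ys i) * nrm (ys i) v ^ 2))
    -- the (w,∞)-norm
    (Wnorm : V → ℝ)
    (hWnorm : ∀ v, Wnorm v = Real.sqrt (essSup (fun y => w y * nrm y v ^ 2) ρ))
    (M : Set V) (u : V) (δ : ℝ) (hδ0 : 0 < δ) (hδ1 : δ < 1) (ε : ℝ) (hε : 0 < ε)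
    -- the noise and the perturbed empirical seminorm
    (η : Y → ℝ) (hη_meas : Measurable η)
    (hη : ∀ i, w (ys i) * η (ys i) ^ 2 ≤ 1 / 4 * (1 - δ) * ε ^ 2)
    (empη : V → ℝ)
    (hempη : ∀ v, empη v =
      Real.sqrt ((n : ℝ)⁻¹ * ∑ i, w (ys i) * (nrm (ys i) v + η (ys i)) ^ 2))
    -- the best approximation and the perturbed empirical best approximation
    (uM : V) (huM : uM ∈ M) (huM_best : ∀ v ∈ M, Nrm (u - uM) ≤ Nrm (u - v))
    (uMnη : V) (huMnη : uMnη ∈ M)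
    (huMnη_best : ∀ v ∈ M, empη (u - uMnη) ≤ empη (u - v))
    -- RIP({u_M} − M, δ)
    (hRIP : ∀ v ∈ M,
      (1 - δ) * Nrm (uM - v) ^ 2 ≤ empn (uM - v) ^ 2 ∧
      empn (uM - v) ^ 2 ≤ (1 + δ) * Nrm (uM - v) ^ 2)
    -- ‖u − u_M‖ₙ ≤ ‖u − u_M‖_{w,∞} (holds for almost every sample tuple)
    (hbound : empn (u - uM) ≤ Wnorm (u - uM)) :
    Nrm (uM - uMnη) ≤ 2 / Real.sqrt (1 - δ) * Wnorm (u - uM) + ε ∧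
    (((1 - δ) * Nrm (u - uM) ^ 2 ≤ empn (u - uM) ^ 2 ∧
        empn (u - uM) ^ 2 ≤ (1 + δ) * Nrm (u - uM) ^ 2) →
      Nrm (uM - uMnη) ≤ 2 * Real.sqrt ((1 + δ) / (1 - δ)) * Nrm (u - uM) + ε) :=
  empirical_projection_error_noisy_general ρ nrm hnrm_smul hnrm_add Nrm hNrm w hw_pos n ys empn
    hempn Wnorm M u δ hδ1 ε hε η hη empη hempη uM huM uMnη huMnη huMnη_best hRIP hbound
end

section
/- Let A ⊆ V and suppose there is a countable subset D ⊆ A such that for every y ∈ Y the pointwise supremum b̂(y) := sup_{v∈A} |v|_y² equals sup_{v∈D} |v|_y². Assume 0 < ∫_Y b̂ dρ < ∞ and b̂(y) > 0 for ρ-almost every y. Then: (i) for every weight function w, K_w(A) ≥ ∫_Y b̂ dρ; and (ii) the function w* := (∫_Y b̂ dρ) · b̂^{-1} is a weight function (i.e. ∫_Y (w*)^{-1} dρ = 1) and K_{w*}(A) = ∫_Y b̂ dρ, so the lower bound is attained by w*. -/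
open MeasureTheory ENNReal

/-! If `K = K_w(A)` is finite, then for each of the countably many `u ∈ D` we have
`w |u|² ≤ K` almost everywhere, hence `b̂ ≤ K w⁻¹` almost everywhere, and integrating against
`∫ w⁻¹ dρ = 1` gives `∫ b̂ dρ ≤ K`. For `w* = (∫ b̂)/b̂` the reverse bound holds pointwise,
since `|u|²_y ≤ b̂(y)` for `u ∈ A`. -/

section

variable {Y ι : Type*} [MeasurableSpace Y] {ρ : Measure Y}

theorem ae_forall_le_toReal_biSup_essSup {D : Set ι} (hD : D.Countable) (F : ι → Y → ℝ)
    (hK : ⨆ i ∈ D, essSup (fun y => ENNReal.ofReal (F i y)) ρ ≠ ⊤) :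
    ∀ᵐ y ∂ρ, ∀ i ∈ D, F i y ≤ (⨆ i ∈ D, essSup (fun y => ENNReal.ofReal (F i y)) ρ).toReal := by
  rw [ae_ball_iff hD]
  intro i hi
  filter_upwards [ENNReal.ae_le_essSup fun y => ENNReal.ofReal (F i y)] with y hy
  exact (ENNReal.ofReal_le_iff_le_toReal hK).1
    (hy.trans (le_biSup (fun i => essSup (fun y => ENNReal.ofReal (F i y)) ρ) hi))

theorem ofReal_integral_le_biSup_essSup_mul {D : Set ι} (hD : D.Countable) (g : Y → ι → ℝ)
    {b : Y → ℝ} (hb : ∀ y, IsLUB (g y '' D) (b y)) (hb_int : Integrable b ρ)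
    {w : Y → ℝ} (hw_pos : ∀ᵐ y ∂ρ, 0 < w y) (hw : ∫ y, (w y)⁻¹ ∂ρ = 1) :
    ENNReal.ofReal (∫ y, b y ∂ρ) ≤ ⨆ i ∈ D, essSup (fun y => ENNReal.ofReal (w y * g y i)) ρ := by
  set K := ⨆ i ∈ D, essSup (fun y => ENNReal.ofReal (w y * g y i)) ρ
  rcases eq_or_ne K ⊤ with hK | hK
  · exact hK ▸ le_top
  have hw_int : Integrable (fun y => (w y)⁻¹) ρ :=
    Integrable.of_integral_ne_zero (hw ▸ one_ne_zero)
  have hb_le : ∀ᵐ y ∂ρ, b y ≤ K.toReal * (w y)⁻¹ := by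
    filter_upwards [ae_forall_le_toReal_biSup_essSup hD (fun i y => w y * g y i) hK, hw_pos]
      with y hy hwy
    refine (hb y).2 ?_
    rintro _ ⟨i, hi, rfl⟩
    rw [← div_eq_mul_inv, le_div_iff₀ hwy, mul_comm]
    exact hy i hi
  calc ENNReal.ofReal (∫ y, b y ∂ρ)
      ≤ ENNReal.ofReal (∫ y, K.toReal * (w y)⁻¹ ∂ρ) :=
        ENNReal.ofReal_le_ofReal (integral_mono_ae hb_int (hw_int.const_mul _) hb_le)
    _ = K := by rw [integral_const_mul, hw, mul_one, ENNReal.ofReal_toReal hK]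

theorem biSup_essSup_div_mul_le {A : Set ι} (g : Y → ι → ℝ) {b : Y → ℝ}
    (hg : ∀ y, ∀ i ∈ A, g y i ≤ b y) (hb_pos : ∀ᵐ y ∂ρ, 0 < b y) {c : ℝ} (hc : 0 ≤ c) :
    ⨆ i ∈ A, essSup (fun y => ENNReal.ofReal (c / b y * g y i)) ρ ≤ ENNReal.ofReal c := by
  refine iSup₂_le fun i hi => essSup_le_of_ae_le _ ?_
  filter_upwards [hb_pos] with y hy
  refine ENNReal.ofReal_le_ofReal ?_
  calc c / b y * g y i ≤ c / b y * b y := by gcongr; exact hg y i hi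
    _ = c := div_mul_cancel₀ _ hy.ne'

theorem integral_inv_integral_div_self {b : Y → ℝ} (hb : ∫ y, b y ∂ρ ≠ 0) :
    ∫ y, ((∫ z, b z ∂ρ) / b y)⁻¹ ∂ρ = 1 := by
  simp_rw [inv_div]
  rw [integral_div, div_self hb]

end

theorem optimal_weight_function_general
    {Y : Type*} [MeasurableSpace Y] (ρ : Measure Y)
    {V : Type*}
    -- the family of seminorms
    (nrm : Y → V → ℝ)
    -- the sets A and D
    (A D : Set V) (hD_count : D.Countable) (hDA : D ⊆ A)
    -- the pointwise supremum b̂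
    (bhat : Y → ℝ)
    (hbhatA : ∀ y, IsLUB ((fun v => nrm y v ^ 2) '' A) (bhat y))
    (hbhatD : ∀ y, IsLUB ((fun v => nrm y v ^ 2) '' D) (bhat y))
    -- b̂ is integrable with positive integral and positive a.e.
    (hb_int : Integrable bhat ρ) (hb_pos_int : 0 < ∫ y, bhat y ∂ρ)
    (hb_pos : ∀ᵐ y ∂ρ, 0 < bhat y) :
    -- (i) every weight function satisfies K_w(A) ≥ ∫ b̂ dρ
    (∀ w : Y → ℝ, Measurable w → (∀ y, 0 < w y) → (∫ y, (w y)⁻¹ ∂ρ = 1) →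
      ENNReal.ofReal (∫ y, bhat y ∂ρ) ≤
        ⨆ u ∈ A, essSup (fun y => ENNReal.ofReal (w y * nrm y u ^ 2)) ρ) ∧
    -- (ii) the weight function w* = (∫ b̂ dρ)·b̂⁻¹ attains the lower bound
    (∫ y, ((∫ z, bhat z ∂ρ) / bhat y)⁻¹ ∂ρ = 1) ∧
    (⨆ u ∈ A,
        essSup (fun y => ENNReal.ofReal ((∫ z, bhat z ∂ρ) / bhat y * nrm y u ^ 2)) ρ) =
      ENNReal.ofReal (∫ y, bhat y ∂ρ) := by
  have lower_bound : ∀ w : Y → ℝ, (∀ᵐ y ∂ρ, 0 < w y) → ∫ y, (w y)⁻¹ ∂ρ = 1 →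
      ENNReal.ofReal (∫ y, bhat y ∂ρ) ≤
        ⨆ u ∈ A, essSup (fun y => ENNReal.ofReal (w y * nrm y u ^ 2)) ρ := fun w hw_pos hw =>
    (ofReal_integral_le_biSup_essSup_mul hD_count _ hbhatD hb_int hw_pos hw).trans
      (biSup_mono hDA)
  have hw_opt := integral_inv_integral_div_self hb_pos_int.ne'
  refine ⟨fun w _ hw_pos hw => lower_bound w (.of_forall hw_pos) hw, hw_opt, le_antisymm ?_ ?_⟩
  · exact biSup_essSup_div_mul_le _ (fun y u hu => (hbhatA y).1 ⟨u, hu, rfl⟩) hb_pos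
      hb_pos_int.le
  · refine lower_bound _ ?_ hw_opt
    filter_upwards [hb_pos] with y hy
    exact div_pos hb_pos_int hy

/-- (Theorem 3.12, second part: optimal sampling.) If
`0 < ∫ b̂ dρ < ∞` and `b̂ > 0` a.e., then `K_w(A) ≥ ∫ b̂ dρ` for every weight
function `w`, and the weight function `w* = (∫ b̂ dρ)·b̂⁻¹` attains this bound:
`∫ (w*)⁻¹ dρ = 1` and `K_{w*}(A) = ∫ b̂ dρ`. -/
theorem optimal_weight_function
    {Y : Type*} [MeasurableSpace Y] (ρ : Measure Y) [IsProbabilityMeasure ρ]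
    {V : Type*} [AddCommGroup V] [Module ℝ V]
    -- the family of seminorms
    (nrm : Y → V → ℝ)
    (hnrm_nonneg : ∀ y v, 0 ≤ nrm y v)
    (hnrm_smul : ∀ (y : Y) (a : ℝ) (v : V), nrm y (a • v) = |a| * nrm y v)
    (hnrm_add : ∀ (y : Y) (u v : V), nrm y (u + v) ≤ nrm y u + nrm y v)
    (hnrm_meas : ∀ v, Measurable fun y => nrm y v)
    (hnrm_int : ∀ v, Integrable (fun y => nrm y v ^ 2) ρ)
    -- the sets A and D
    (A D : Set V) (hD_count : D.Countable) (hDA : D ⊆ A)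
    -- the pointwise supremum b̂
    (bhat : Y → ℝ)
    (hbhatA : ∀ y, IsLUB ((fun v => nrm y v ^ 2) '' A) (bhat y))
    (hbhatD : ∀ y, IsLUB ((fun v => nrm y v ^ 2) '' D) (bhat y))
    -- b̂ is integrable with positive integral and positive a.e.
    (hb_int : Integrable bhat ρ) (hb_pos_int : 0 < ∫ y, bhat y ∂ρ)
    (hb_pos : ∀ᵐ y ∂ρ, 0 < bhat y) :
    -- (i) every weight function satisfies K_w(A) ≥ ∫ b̂ dρ
    (∀ w : Y → ℝ, Measurable w → (∀ y, 0 < w y) → (∫ y, (w y)⁻¹ ∂ρ = 1) →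
      ENNReal.ofReal (∫ y, bhat y ∂ρ) ≤
        ⨆ u ∈ A, essSup (fun y => ENNReal.ofReal (w y * nrm y u ^ 2)) ρ) ∧
    -- (ii) the weight function w* = (∫ b̂ dρ)·b̂⁻¹ attains the lower bound
    (∫ y, ((∫ z, bhat z ∂ρ) / bhat y)⁻¹ ∂ρ = 1) ∧
    (⨆ u ∈ A,
        essSup (fun y => ENNReal.ofReal ((∫ z, bhat z ∂ρ) / bhat y * nrm y u ^ 2)) ρ) =
      ENNReal.ofReal (∫ y, bhat y ∂ρ) :=
  optimal_weight_function_general ρ nrm A D hD_count hDA bhat hbhatA hbhatD hb_int hb_pos_int hb_pos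
end

section
/- Let (Y, ρ) be a probability space and let B_1,…,B_m : Y → ℝ be measurable functions that are orthonormal in L²(Y, ρ). Define b̂(y) := Σ_{j=1}^m B_j(y)². Then: (i) for every y ∈ Y, sup{ (Σ_{j=1}^m c_j B_j(y))² : c ∈ ℝ^m, ‖c‖₂ = 1 } = b̂(y); (ii) ∫_Y b̂ dρ = m; (iii) for every measurable w : Y → (0,∞) with ∫_Y w^{-1} dρ = 1 one has esssup_{y∈Y} w(y) b̂(y) ≥ m; and (iv) if b̂(y) > 0 for ρ-almost every y, then w*(y) := m / b̂(y) satisfies ∫_Y (w*)^{-1} dρ = 1 and esssup_{y∈Y} w*(y) b̂(y) = m. -/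
/-!
Pointwise, `(∑ j, c j * B j y) ^ 2 ≤ ∑ j, B j y ^ 2` for unit `c` is Cauchy–Schwarz, with
equality for `c` proportional to `(B j y)_j`. Orthonormality gives `∫ b̂ = m`, and then for any
weight `w` the `L^∞`–`L^1` Hölder bound
`m = ∫ (w b̂) w⁻¹ ≤ esssup (w b̂) · ∫ w⁻¹ = esssup (w b̂)` gives (iii); the weight `m / b̂`
makes `w b̂` constant, so it attains the bound.
-/

open MeasureTheory ENNReal Finset

section UnitSphere

variable {ι : Type*} [Fintype ι]

theorem exists_sum_sq_eq_one_and_sq_sum_mul_eq [Nonempty ι] (v : ι → ℝ) :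
    ∃ c : ι → ℝ, ∑ j, c j ^ 2 = 1 ∧ (∑ j, c j * v j) ^ 2 = ∑ j, v j ^ 2 := by
  classical
  by_cases hv : v = 0
  · obtain ⟨i⟩ := ‹Nonempty ι›
    exact ⟨Pi.single i 1, by simp [hv, sq, Pi.single_apply]⟩
  · have hb : 0 < ∑ j, v j ^ 2 := by
      obtain ⟨i, hi⟩ := Function.ne_iff.mp hv
      exact sum_pos' (fun j _ => sq_nonneg _) ⟨i, mem_univ i, sq_pos_of_ne_zero hi⟩
    set s := Real.sqrt (∑ j, v j ^ 2)
    have hs : s ^ 2 = ∑ j, v j ^ 2 := Real.sq_sqrt hb.le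
    refine ⟨fun j => v j / s, ?_, ?_⟩
    · simp_rw [div_pow, ← sum_div, hs, div_self hb.ne']
    · simp_rw [div_mul_eq_mul_div, ← sq, ← sum_div, div_pow, ← hs]
      field_simp

theorem isGreatest_sq_sum_mul_of_sum_sq_eq_one [Nonempty ι] (v : ι → ℝ) :
    IsGreatest {t : ℝ | ∃ c : ι → ℝ, (∑ j, c j ^ 2 = 1) ∧ t = (∑ j, c j * v j) ^ 2}
      (∑ j, v j ^ 2) := by
  refine ⟨?_, ?_⟩
  · obtain ⟨c, hc, hcv⟩ := exists_sum_sq_eq_one_and_sq_sum_mul_eq v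
    exact ⟨c, hc, hcv.symm⟩
  · rintro t ⟨c, hc, rfl⟩
    simpa [hc] using sum_mul_sq_le_sq_mul_sq univ c v

end UnitSphere

section Integrals

variable {α : Type*} [MeasurableSpace α] {μ : Measure α}

theorem integral_sum_sq_eq_card {ι : Type*} [Fintype ι] {B : ι → α → ℝ}
    (hB : ∀ j, ∫ x, B j x ^ 2 ∂μ = 1) :
    ∫ x, ∑ j, B j x ^ 2 ∂μ = Fintype.card ι := by
  rw [integral_finsetSum _ fun j _ => integrable_of_integral_eq_one (hB j)]
  simp [hB]

theorem lintegral_mul_le_essSup_mul_lintegral (f : α → ℝ≥0∞) {g : α → ℝ≥0∞}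
    (hg : AEMeasurable g μ) :
    ∫⁻ x, f x * g x ∂μ ≤ essSup f μ * ∫⁻ x, g x ∂μ := by
  rw [← lintegral_const_mul'' _ hg]
  refine lintegral_mono_ae ?_
  filter_upwards [ae_le_essSup f] with x hx
  exact mul_le_mul_left hx _

theorem ofReal_integral_le_essSup_mul_of_integral_inv_eq_one {f w : α → ℝ}
    (hf : Integrable f μ) (hf0 : 0 ≤ᵐ[μ] f) (hw : AEMeasurable w μ) (hw0 : ∀ᵐ x ∂μ, 0 < w x)
    (hw1 : ∫ x, (w x)⁻¹ ∂μ = 1) :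
    ENNReal.ofReal (∫ x, f x ∂μ) ≤ essSup (fun x => ENNReal.ofReal (w x * f x)) μ := by
  have hf_split : ∀ᵐ x ∂μ,
      ENNReal.ofReal (f x) = ENNReal.ofReal (w x * f x) * ENNReal.ofReal (w x)⁻¹ := by
    filter_upwards [hw0] with x hx
    rw [mul_comm, ← ENNReal.ofReal_mul (inv_nonneg.mpr hx.le), inv_mul_cancel_left₀ hx.ne']
  have hw_inv : ∫⁻ x, ENNReal.ofReal (w x)⁻¹ ∂μ = 1 := by
    rw [← ofReal_integral_eq_lintegral_ofReal (integrable_of_integral_eq_one hw1)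
      (by filter_upwards [hw0] with x hx using inv_nonneg.mpr hx.le), hw1, ENNReal.ofReal_one]
  calc ENNReal.ofReal (∫ x, f x ∂μ)
      = ∫⁻ x, ENNReal.ofReal (w x * f x) * ENNReal.ofReal (w x)⁻¹ ∂μ := by
        rw [ofReal_integral_eq_lintegral_ofReal hf hf0, lintegral_congr_ae hf_split]
    _ ≤ essSup (fun x => ENNReal.ofReal (w x * f x)) μ * ∫⁻ x, ENNReal.ofReal (w x)⁻¹ ∂μ :=
        lintegral_mul_le_essSup_mul_lintegral _ hw.inv.ennreal_ofReal
    _ = essSup (fun x => ENNReal.ofReal (w x * f x)) μ := by rw [hw_inv, mul_one]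

end Integrals

theorem linear_space_variation_constant_general
    {Y : Type*} [MeasurableSpace Y] (ρ : Measure Y) [IsProbabilityMeasure ρ]
    (m : ℕ) (hm : 0 < m)
    (B : Fin m → Y → ℝ)
    (hB_on : ∀ i j, ∫ y, B i y * B j y ∂ρ = if i = j then 1 else 0) :
    -- (i)
    (∀ y, IsLUB
      {t : ℝ | ∃ c : Fin m → ℝ, (∑ j, c j ^ 2 = 1) ∧ t = (∑ j, c j * B j y) ^ 2}
      (∑ j, B j y ^ 2)) ∧
    -- (ii)
    (∫ y, (∑ j, B j y ^ 2) ∂ρ = m) ∧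
    -- (iii)
    (∀ w : Y → ℝ, Measurable w → (∀ y, 0 < w y) → (∫ y, (w y)⁻¹ ∂ρ = 1) →
      (m : ℝ≥0∞) ≤ essSup (fun y => ENNReal.ofReal (w y * ∑ j, B j y ^ 2)) ρ) ∧
    -- (iv)
    ((∀ᵐ y ∂ρ, 0 < ∑ j, B j y ^ 2) →
      (∫ y, ((m : ℝ) / ∑ j, B j y ^ 2)⁻¹ ∂ρ = 1) ∧
      essSup (fun y => ENNReal.ofReal ((m : ℝ) / (∑ j, B j y ^ 2) * ∑ j, B j y ^ 2)) ρ =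
        (m : ℝ≥0∞)) := by
  have : Nonempty (Fin m) := ⟨⟨0, hm⟩⟩
  have hm0 : (m : ℝ) ≠ 0 := by positivity
  have hb : ∫ y, ∑ j, B j y ^ 2 ∂ρ = m := by
    rw [integral_sum_sq_eq_card fun j => by simpa [sq] using hB_on j j, Fintype.card_fin]
  have hb_int : Integrable (fun y => ∑ j, B j y ^ 2) ρ :=
    .of_integral_ne_zero (hb ▸ hm0)
  have hb0 : 0 ≤ᵐ[ρ] fun y => ∑ j, B j y ^ 2 :=
    ae_of_all _ fun y => sum_nonneg fun j _ => sq_nonneg _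
  refine ⟨fun y => (isGreatest_sq_sum_mul_of_sum_sq_eq_one _).isLUB, hb,
    fun w hw hw0 hw1 => ?_, fun hpos => ⟨?_, ?_⟩⟩
  · simpa [hb] using ofReal_integral_le_essSup_mul_of_integral_inv_eq_one hb_int hb0
      hw.aemeasurable (ae_of_all _ hw0) hw1
  · simp_rw [inv_div, integral_div, hb, div_self hm0]
  · have hconst : (fun y => ENNReal.ofReal ((m : ℝ) / (∑ j, B j y ^ 2) * ∑ j, B j y ^ 2))
        =ᵐ[ρ] fun _ => (m : ℝ≥0∞) := by
      filter_upwards [hpos] with y hy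
      rw [div_mul_cancel₀ _ hy.ne', ENNReal.ofReal_natCast]
    rw [essSup_congr_ae hconst, essSup_const _ (IsProbabilityMeasure.ne_zero ρ)]

/-- (Linear spaces, Section 4.1.) For an orthonormal family
`B_1,…,B_m` in `L²(Y,ρ)` and `b̂(y) = Σ_j B_j(y)²`:
(i) `b̂(y)` is the supremum of `(Σ_j c_j B_j(y))²` over unit vectors `c`;
(ii) `∫ b̂ dρ = m`;
(iii) every weight function `w` satisfies `esssup w·b̂ ≥ m`;
(iv) if `b̂ > 0` a.e. then `w* = m/b̂` is a weight function with `esssup w*·b̂ = m`. -/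
theorem linear_space_variation_constant
    {Y : Type*} [MeasurableSpace Y] (ρ : Measure Y) [IsProbabilityMeasure ρ]
    (m : ℕ) (hm : 0 < m)
    (B : Fin m → Y → ℝ) (hB_meas : ∀ j, Measurable (B j))
    (hB_on : ∀ i j, ∫ y, B i y * B j y ∂ρ = if i = j then 1 else 0) :
    -- (i)
    (∀ y, IsLUB
      {t : ℝ | ∃ c : Fin m → ℝ, (∑ j, c j ^ 2 = 1) ∧ t = (∑ j, c j * B j y) ^ 2}
      (∑ j, B j y ^ 2)) ∧
    -- (ii)
    (∫ y, (∑ j, B j y ^ 2) ∂ρ = m) ∧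
    -- (iii)
    (∀ w : Y → ℝ, Measurable w → (∀ y, 0 < w y) → (∫ y, (w y)⁻¹ ∂ρ = 1) →
      (m : ℝ≥0∞) ≤ essSup (fun y => ENNReal.ofReal (w y * ∑ j, B j y ^ 2)) ρ) ∧
    -- (iv)
    ((∀ᵐ y ∂ρ, 0 < ∑ j, B j y ^ 2) →
      (∫ y, ((m : ℝ) / ∑ j, B j y ^ 2)⁻¹ ∂ρ = 1) ∧
      essSup (fun y => ENNReal.ofReal ((m : ℝ) / (∑ j, B j y ^ 2) * ∑ j, B j y ^ 2)) ρ =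
        (m : ℝ≥0∞)) :=
  linear_space_variation_constant_general ρ m hm B hB_on
end

section
/- For every s > 0 and every v ∈ M_{ω,s} one has ‖v‖_{w,∞} ≤ √s · ‖v‖_{L²(ρ)}. Consequently K(U(M_{ω,s})) := sup{ ‖v‖_{w,∞}² / ‖v‖_{L²(ρ)}² : v ∈ M_{ω,s}, v ≠ 0 } ≤ s. -/
open MeasureTheory ENNReal
open scoped Classical

/-! Since `1 = ∫ B_j² ≤ ω_j² ∫ w⁻¹ = ω_j²`, every nonzero coefficient of `v` costs at least `1`
in the weighted `ℓ⁰`-seminorm, so `v` has finitely many nonzero coefficients and, by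
completeness, equals the finite expansion `∑_{j ∈ T} c_j B_j` almost everywhere, with
`‖v‖² = ∑_{j ∈ T} c_j²`. Pointwise Cauchy–Schwarz then gives
`w v² ≤ (∑_T c_j²) (∑_T w B_j²) ≤ ‖v‖² ∑_T ω_j² ≤ s ‖v‖²` almost everywhere. -/

section Orthonormal

variable {Y ι : Type*} [MeasurableSpace Y] {ρ : Measure Y} {B : ι → Y → ℝ}

lemma integrable_mul_of_memLp_two {f g : Y → ℝ} (hf : MemLp f 2 ρ) (hg : MemLp g 2 ρ) :
    Integrable (fun y => f y * g y) ρ :=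
  hf.integrable_mul hg

lemma memLp_two_of_integral_mul_self_ne_zero {f : Y → ℝ} (hf : AEStronglyMeasurable f ρ)
    (h : ∫ y, f y * f y ∂ρ ≠ 0) : MemLp f 2 ρ :=
  (memLp_two_iff_integrable_sq hf).2 (by simpa only [sq] using Integrable.of_integral_ne_zero h)

lemma integral_sum_mul_of_orthonormal [DecidableEq ι]
    (hB : ∀ i j, ∫ y, B i y * B j y ∂ρ = if i = j then 1 else 0) (hB2 : ∀ j, MemLp (B j) 2 ρ)
    (T : Finset ι) (a : ι → ℝ) (j : ι) :
    ∫ y, (∑ i ∈ T, a i * B i y) * B j y ∂ρ = if j ∈ T then a j else 0 := by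
  simp_rw [Finset.sum_mul, mul_assoc]
  rw [integral_finsetSum T fun i _ =>
    (integrable_mul_of_memLp_two (hB2 i) (hB2 j)).const_mul (a i)]
  simp_rw [integral_const_mul, hB, mul_ite, mul_one, mul_zero]
  exact Finset.sum_ite_eq' T j a

lemma ae_eq_sum_coeff_of_complete [DecidableEq ι]
    (hB : ∀ i j, ∫ y, B i y * B j y ∂ρ = if i = j then 1 else 0) (hB2 : ∀ j, MemLp (B j) 2 ρ)
    (hB_complete : ∀ f : Y → ℝ, MemLp f 2 ρ → (∀ j, ∫ y, f y * B j y ∂ρ = 0) → f =ᵐ[ρ] 0)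
    {v : Y → ℝ} (hv : MemLp v 2 ρ) {T : Finset ι} (hT : ∀ j ∉ T, ∫ y, v y * B j y ∂ρ = 0) :
    v =ᵐ[ρ] fun y => ∑ j ∈ T, (∫ x, v x * B j x ∂ρ) * B j y := by
  set g : Y → ℝ := fun y => ∑ j ∈ T, (∫ x, v x * B j x ∂ρ) * B j y
  have hg : MemLp g 2 ρ := memLp_finsetSum T fun j _ => (hB2 j).const_mul _
  have h_orth : ∀ j, ∫ y, (v y - g y) * B j y ∂ρ = 0 := by
    intro j
    simp_rw [sub_mul]
    rw [integral_sub (integrable_mul_of_memLp_two hv (hB2 j))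
      (integrable_mul_of_memLp_two hg (hB2 j)), integral_sum_mul_of_orthonormal hB hB2]
    split_ifs with hj
    · exact sub_self _
    · rw [sub_zero, hT j hj]
  filter_upwards [hB_complete _ (hv.sub hg) h_orth] with y hy
  exact sub_eq_zero.mp hy

lemma integral_sq_eq_sum_sq_coeff (hB2 : ∀ j, MemLp (B j) 2 ρ) {v : Y → ℝ} (hv : MemLp v 2 ρ)
    {T : Finset ι} (hvT : v =ᵐ[ρ] fun y => ∑ j ∈ T, (∫ x, v x * B j x ∂ρ) * B j y) :
    ∫ y, v y ^ 2 ∂ρ = ∑ j ∈ T, (∫ y, v y * B j y ∂ρ) ^ 2 := by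
  calc ∫ y, v y ^ 2 ∂ρ
      = ∫ y, ∑ j ∈ T, (∫ x, v x * B j x ∂ρ) * (v y * B j y) ∂ρ := by
        refine integral_congr_ae ?_
        filter_upwards [hvT] with y hy
        conv_lhs => rw [sq]; arg 2; rw [hy]
        simp_rw [Finset.mul_sum, mul_left_comm]
    _ = ∑ j ∈ T, (∫ y, v y * B j y ∂ρ) ^ 2 := by
        rw [integral_finsetSum T fun j _ => (integrable_mul_of_memLp_two hv (hB2 j)).const_mul _]
        simp_rw [integral_const_mul, sq]

end Orthonormal

section Weighted

variable {Y ι : Type*} [MeasurableSpace Y] {ρ : Measure Y}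

lemma integral_sq_le_of_ae_mul_sq_le {w f : Y → ℝ} {a : ℝ} (hw : ∀ y, 0 < w y)
    (hw_int : Integrable (fun y => (w y)⁻¹) ρ) (hf : Integrable (fun y => f y ^ 2) ρ)
    (h : ∀ᵐ y ∂ρ, w y * f y ^ 2 ≤ a) : ∫ y, f y ^ 2 ∂ρ ≤ a * ∫ y, (w y)⁻¹ ∂ρ := by
  rw [← integral_const_mul]
  refine integral_mono_ae hf (hw_int.const_mul a) ?_
  filter_upwards [h] with y hy
  calc f y ^ 2 = (w y)⁻¹ * (w y * f y ^ 2) := by field_simp [(hw y).ne']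
    _ ≤ (w y)⁻¹ * a := mul_le_mul_of_nonneg_left hy (inv_nonneg.2 (hw y).le)
    _ = a * (w y)⁻¹ := mul_comm _ _

lemma one_le_of_ae_mul_sq_le {w f : Y → ℝ} {a : ℝ} (hw : ∀ y, 0 < w y)
    (hw_int : ∫ y, (w y)⁻¹ ∂ρ = 1) (hf : AEStronglyMeasurable f ρ) (hf1 : ∫ y, f y * f y ∂ρ = 1)
    (h : ∀ᵐ y ∂ρ, w y * f y ^ 2 ≤ a) : 1 ≤ a := by
  have hf2 := memLp_two_of_integral_mul_self_ne_zero hf (by simp [hf1])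
  have := integral_sq_le_of_ae_mul_sq_le hw (.of_integral_ne_zero (by simp [hw_int]))
    ((memLp_two_iff_integrable_sq hf).1 hf2) h
  simpa only [sq, hf1, hw_int, mul_one] using this

lemma ae_le_of_essSup_ofReal_le {g : Y → ℝ} {a : ℝ} (ha : 0 ≤ a)
    (h : essSup (fun y => ENNReal.ofReal (g y)) ρ ≤ ENNReal.ofReal a) : ∀ᵐ y ∂ρ, g y ≤ a := by
  filter_upwards [ENNReal.ae_le_essSup fun y => ENNReal.ofReal (g y)] with y hy
  exact (ENNReal.ofReal_le_ofReal_iff ha).mp (hy.trans h)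

lemma mul_sq_sum_mul_le (T : Finset ι) (c b : ι → ℝ) {w : ℝ} (hw : 0 ≤ w) :
    w * (∑ j ∈ T, c j * b j) ^ 2 ≤ (∑ j ∈ T, c j ^ 2) * ∑ j ∈ T, w * b j ^ 2 := by
  calc w * (∑ j ∈ T, c j * b j) ^ 2 ≤ w * ((∑ j ∈ T, c j ^ 2) * ∑ j ∈ T, b j ^ 2) :=
        mul_le_mul_of_nonneg_left (Finset.sum_mul_sq_le_sq_mul_sq T c b) hw
    _ = (∑ j ∈ T, c j ^ 2) * ∑ j ∈ T, w * b j ^ 2 := by rw [mul_left_comm, Finset.mul_sum]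

lemma essSup_mul_sq_le_of_ae_eq_sum [Countable ι] {w : Y → ℝ} (hw : ∀ y, 0 ≤ w y)
    {B : ι → Y → ℝ} {ω : ι → ℝ} (hB : ∀ j, ∀ᵐ y ∂ρ, w y * B j y ^ 2 ≤ ω j ^ 2)
    {T : Finset ι} {c : ι → ℝ} {g : Y → ℝ} (hg : g =ᵐ[ρ] fun y => ∑ j ∈ T, c j * B j y)
    {S : ℝ≥0∞} (hS : ∑ j ∈ T, ENNReal.ofReal (ω j ^ 2) ≤ S) :
    essSup (fun y => ENNReal.ofReal (w y * g y ^ 2)) ρ ≤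
      ENNReal.ofReal (∑ j ∈ T, c j ^ 2) * S := by
  have hc : 0 ≤ ∑ j ∈ T, c j ^ 2 := Finset.sum_nonneg fun j _ => sq_nonneg _
  refine essSup_le_of_ae_le _ ?_
  filter_upwards [hg, ae_all_iff.2 hB] with y hgy hy
  calc ENNReal.ofReal (w y * g y ^ 2)
      ≤ ENNReal.ofReal ((∑ j ∈ T, c j ^ 2) * ∑ j ∈ T, ω j ^ 2) := by
        rw [hgy]
        refine ENNReal.ofReal_le_ofReal ((mul_sq_sum_mul_le T c _ (hw y)).trans ?_)
        exact mul_le_mul_of_nonneg_left (Finset.sum_le_sum fun j _ => hy j) hc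
    _ = ENNReal.ofReal (∑ j ∈ T, c j ^ 2) * ∑ j ∈ T, ENNReal.ofReal (ω j ^ 2) := by
        rw [ENNReal.ofReal_mul hc, ENNReal.ofReal_sum_of_nonneg fun j _ => sq_nonneg (ω j)]
    _ ≤ ENNReal.ofReal (∑ j ∈ T, c j ^ 2) * S := by gcongr

lemma finite_setOf_ne_zero_of_tsum_ite_ne_top {c : ι → ℝ} {a : ι → ℝ≥0∞} (ha : ∀ j, 1 ≤ a j)
    (h : ∑' j, (if c j = 0 then 0 else a j) ≠ ∞) : {j | c j ≠ 0}.Finite :=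
  (ENNReal.finite_const_le_of_tsum_ne_top h one_ne_zero).subset fun j hj => by
    simpa only [Set.mem_ofPred_eq, if_neg hj] using ha j

end Weighted

theorem weighted_sparse_winf_bound_general
    {Y : Type*} [MeasurableSpace Y] (ρ : Measure Y)
    -- an orthonormal basis (B_j) of L²(Y,ρ)
    (B : ℕ → Y → ℝ) (hB_meas : ∀ j, Measurable (B j))
    (hB_on : ∀ i j, ∫ y, B i y * B j y ∂ρ = if i = j then 1 else 0)
    (hB_complete : ∀ f : Y → ℝ, MemLp f 2 ρ →
      (∀ j, ∫ y, f y * B j y ∂ρ = 0) → f =ᵐ[ρ] 0)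
    -- the weight function
    (w : Y → ℝ) (hw_pos : ∀ y, 0 < w y)
    (hw_int : ∫ y, (w y)⁻¹ ∂ρ = 1)
    -- the weight sequence ω with ω_j ≥ ‖B_j‖_{w,∞}
    (ω : ℕ → ℝ)
    (hω : ∀ j, essSup (fun y => ENNReal.ofReal (w y * B j y ^ 2)) ρ ≤
      ENNReal.ofReal (ω j ^ 2))
    (s : ℝ)
    -- v ∈ M_{ω,s}: v ∈ L²(ρ) with weighted ℓ⁰-seminorm of its coefficients ≤ s
    (v : Y → ℝ) (hv : MemLp v 2 ρ)
    (hv_sparse : ∑' j, (if (∫ y, v y * B j y ∂ρ) = 0 then 0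
      else ENNReal.ofReal (ω j ^ 2)) ≤ ENNReal.ofReal s) :
    essSup (fun y => ENNReal.ofReal (w y * v y ^ 2)) ρ ≤
      ENNReal.ofReal (s * ∫ y, v y ^ 2 ∂ρ) := by
  have hB2 : ∀ j, MemLp (B j) 2 ρ := fun j =>
    memLp_two_of_integral_mul_self_ne_zero (hB_meas j).aestronglyMeasurable (by simp [hB_on])
  have hBω : ∀ j, ∀ᵐ y ∂ρ, w y * B j y ^ 2 ≤ ω j ^ 2 := fun j =>
    ae_le_of_essSup_ofReal_le (sq_nonneg _) (hω j)
  have hω_one : ∀ j, 1 ≤ ENNReal.ofReal (ω j ^ 2) := fun j => ENNReal.one_le_ofReal.2 <|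
    one_le_of_ae_mul_sq_le hw_pos hw_int (hB_meas j).aestronglyMeasurable (by simp [hB_on]) (hBω j)
  have hfin := finite_setOf_ne_zero_of_tsum_ite_ne_top hω_one (hv_sparse.trans_lt ofReal_lt_top).ne
  set T := hfin.toFinset
  have hT : ∀ j ∉ T, ∫ y, v y * B j y ∂ρ = 0 := fun j hj => by
    simpa [T, hfin.mem_toFinset] using hj
  have hvT := ae_eq_sum_coeff_of_complete hB_on hB2 hB_complete hv hT
  have hωT : ∑ j ∈ T, ENNReal.ofReal (ω j ^ 2) ≤ ENNReal.ofReal s :=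
    calc ∑ j ∈ T, ENNReal.ofReal (ω j ^ 2)
        = ∑ j ∈ T, if (∫ y, v y * B j y ∂ρ) = 0 then 0 else ENNReal.ofReal (ω j ^ 2) :=
          Finset.sum_congr rfl fun j hj => (if_neg (hfin.mem_toFinset.1 hj)).symm
      _ ≤ ENNReal.ofReal s := (ENNReal.sum_le_tsum T).trans hv_sparse
  rw [integral_sq_eq_sum_sq_coeff hB2 hv hvT, mul_comm,
    ENNReal.ofReal_mul (Finset.sum_nonneg fun j _ => sq_nonneg _)]
  exact essSup_mul_sq_le_of_ae_eq_sum (fun y => (hw_pos y).le) hBω hvT hωT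

/-- (Lemma 4.5-4.6: weighted-sparse functions.) If
`ω_j ≥ ‖B_j‖_{w,∞}` for all `j`, then every `v ∈ M_{ω,s}` satisfies
`‖v‖_{w,∞} ≤ √s ‖v‖_{L²(ρ)}` (stated in squared form); consequently
`K(U(M_{ω,s})) ≤ s`. -/
theorem weighted_sparse_winf_bound
    {Y : Type*} [MeasurableSpace Y] (ρ : Measure Y) [IsProbabilityMeasure ρ]
    -- an orthonormal basis (B_j) of L²(Y,ρ)
    (B : ℕ → Y → ℝ) (hB_meas : ∀ j, Measurable (B j))
    (hB_on : ∀ i j, ∫ y, B i y * B j y ∂ρ = if i = j then 1 else 0)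
    (hB_complete : ∀ f : Y → ℝ, MemLp f 2 ρ →
      (∀ j, ∫ y, f y * B j y ∂ρ = 0) → f =ᵐ[ρ] 0)
    -- the weight function
    (w : Y → ℝ) (hw_meas : Measurable w) (hw_pos : ∀ y, 0 < w y)
    (hw_int : ∫ y, (w y)⁻¹ ∂ρ = 1)
    -- the weight sequence ω with ω_j ≥ ‖B_j‖_{w,∞}
    (ω : ℕ → ℝ) (hω_nonneg : ∀ j, 0 ≤ ω j)
    (hω : ∀ j, essSup (fun y => ENNReal.ofReal (w y * B j y ^ 2)) ρ ≤
      ENNReal.ofReal (ω j ^ 2))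
    (s : ℝ) (hs : 0 < s)
    -- v ∈ M_{ω,s}: v ∈ L²(ρ) with weighted ℓ⁰-seminorm of its coefficients ≤ s
    (v : Y → ℝ) (hv : MemLp v 2 ρ)
    (hv_sparse : ∑' j, (if (∫ y, v y * B j y ∂ρ) = 0 then 0
      else ENNReal.ofReal (ω j ^ 2)) ≤ ENNReal.ofReal s) :
    essSup (fun y => ENNReal.ofReal (w y * v y ^ 2)) ρ ≤
      ENNReal.ofReal (s * ∫ y, v y ^ 2 ∂ρ) :=
  weighted_sparse_winf_bound_general ρ B hB_meas hB_on hB_complete w hw_pos hw_int ω hω s v hv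
    hv_sparse
end

section
/- There exists a universal constant C > 0 with the following property. Let S ⊆ ℕ be finite with |S| = m and let V_m := span{B_j : j ∈ S}. Then for every s with 1 ≤ s ≤ m and every r ∈ (0,1], the covering number ν(U(M_{ω,s} ∩ V_m), r) — the smallest N ∈ ℕ such that there exist v_1,…,v_N ∈ U(M_{ω,s} ∩ V_m) whose ‖·‖_{w,∞}-balls of radius r cover U(M_{ω,s} ∩ V_m), where U(A) := {v/‖v‖_{L²(ρ)} : v ∈ A, v ≠ 0} — satisfies ν(U(M_{ω,s} ∩ V_m), r) ≤ (C m / (r √s))^s. -/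
/-!
Write a normalized element of `M_{ω,s} ∩ V_m` as `∑ c_j B_j`; its coefficient vector lies on the
unit sphere of `ℝ^T`, `T` its support, with `∑_{j ∈ T} ω_j² ≤ s`. Since `ω_j ≥ 1`, `|T| ≤ ⌊s⌋`.
By Cauchy–Schwarz and `w B_j² ≤ ω_j²`, `‖∑_{j ∈ T} d_j B_j‖²_{w,∞} ≤ s ∑_{j ∈ T} d_j²`, so an
`ε`-net of each such sphere with `ε = r / (2 √s)` is an `r`-net for `‖·‖_{w,∞}`. A volume argument
gives sphere nets of size `(1 + 2/ε)^|T|`, and there are at most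
`∑_{k ≤ ⌊s⌋} (m choose k) ≤ (e m / ⌊s⌋)^⌊s⌋` supports.
-/

open MeasureTheory ENNReal Metric Set Module
open scoped NNReal Classical

theorem lt_dist_of_lt_edist {X : Type*} [PseudoMetricSpace X] {x y : X} {ε : ℝ≥0}
    (h : (ε : ℝ≥0∞) < edist x y) : (ε : ℝ) < dist x y := by
  rw [← not_le, edist_le_coe, ← NNReal.coe_le_coe, coe_nndist] at h
  exact lt_of_not_ge h

section Packing

variable {E : Type*} [NormedAddCommGroup E] [NormedSpace ℝ E] [FiniteDimensional ℝ E]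

theorem Finset.card_le_of_isSeparated_of_subset_closedBall {ε : ℝ≥0} (hε : 0 < ε) {A : Finset E}
    (hA : ↑A ⊆ closedBall (0 : E) 1) (hsep : IsSeparated ε (A : Set E)) :
    (A.card : ℝ) ≤ (1 + 2 / ε) ^ finrank ℝ E := by
  borelize E
  set μ : Measure E := Measure.addHaar
  set d := finrank ℝ E
  have hε2 : (0 : ℝ) < ε / 2 := by positivity
  have hdisj : (A : Set E).PairwiseDisjoint (ball · (ε / 2)) := fun a ha b hb hab =>
    ball_disjoint_ball (by linarith [lt_dist_of_lt_edist (hsep ha hb hab)])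
  have hsub : ∀ a ∈ A, ball a (ε / 2) ⊆ ball (0 : E) (1 + ε / 2) := fun a ha =>
    ball_subset_ball' (by linarith [mem_closedBall.mp (hA ha)])
  have hvol : ∑ a ∈ A, μ (ball a (ε / 2)) ≤ μ (ball (0 : E) (1 + ε / 2)) := by
    rw [← measure_biUnion_finset hdisj fun a _ => measurableSet_ball]
    exact measure_mono (iUnion₂_subset hsub)
  simp only [Measure.addHaar_ball_of_pos μ _ hε2,
    Measure.addHaar_ball_of_pos μ _ (by positivity : (0 : ℝ) < 1 + ε / 2),
    Finset.sum_const, nsmul_eq_mul, ← mul_assoc] at hvol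
  have hcard := (ENNReal.mul_le_mul_iff_left (measure_ball_pos μ (0 : E) one_pos).ne'
    measure_ball_lt_top.ne).mp hvol
  rw [← ENNReal.ofReal_natCast, ← ENNReal.ofReal_mul (by positivity),
    ENNReal.ofReal_le_ofReal_iff (by positivity), ← le_div_iff₀ (by positivity), ← div_pow] at hcard
  calc (A.card : ℝ) ≤ ((1 + ε / 2) / (ε / 2)) ^ d := hcard
    _ = (1 + 2 / ε) ^ d := by congr 1; field_simp; ring

theorem Metric.packingNumber_le_of_subset_closedBall {ε : ℝ≥0} (hε : 0 < ε) {s : Set E}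
    (hs : s ⊆ closedBall (0 : E) 1) :
    packingNumber ε s ≤ ⌊(1 + 2 / (ε : ℝ)) ^ finrank ℝ E⌋₊ := by
  set n := ⌊(1 + 2 / (ε : ℝ)) ^ finrank ℝ E⌋₊
  refine iSup₂_le fun C hCs => iSup_le fun hC => ?_
  by_contra! hlt
  obtain ⟨t, htC, ht⟩ := exists_subset_encard_eq (Order.add_one_le_of_lt hlt)
  have htfin : t.Finite := finite_of_encard_eq_coe (k := n + 1) (by exact_mod_cast ht)
  have hcard : htfin.toFinset.card = n + 1 := by
    exact_mod_cast htfin.encard_eq_coe_toFinset_card.symm.trans ht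
  have := Finset.card_le_of_isSeparated_of_subset_closedBall (A := htfin.toFinset) hε
    (by simpa using htC.trans (hCs.trans hs)) (by simpa using hC.subset htC)
  rw [hcard] at this
  exact (Nat.lt_floor_add_one ((1 + 2 / (ε : ℝ)) ^ finrank ℝ E)).not_ge (by exact_mod_cast this)

theorem exists_finset_isCover_sphere {ε : ℝ≥0} (hε : 0 < ε) :
    ∃ N : Finset E, ↑N ⊆ sphere (0 : E) 1 ∧ IsCover ε (sphere (0 : E) 1) N ∧
      (N.card : ℝ) ≤ (1 + 2 / (ε : ℝ)) ^ finrank ℝ E := by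
  have hpack :=
    Metric.packingNumber_le_of_subset_closedBall hε (sphere_subset_closedBall (x := (0 : E)))
  have htop : packingNumber ε (sphere (0 : E) 1) ≠ ⊤ := ne_top_of_le_ne_top (by simp) hpack
  have hfin : (maximalSeparatedSet ε (sphere (0 : E) 1)).Finite :=
    encard_ne_top_iff.mp (encard_maximalSeparatedSet htop ▸ htop)
  refine ⟨hfin.toFinset, by simpa using maximalSeparatedSet_subset,
    by simpa using isCover_maximalSeparatedSet htop, ?_⟩
  have hcard : (hfin.toFinset.card : ℕ∞) ≤ ⌊(1 + 2 / (ε : ℝ)) ^ finrank ℝ E⌋₊ := by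
    rw [← hfin.encard_eq_coe_toFinset_card, encard_maximalSeparatedSet htop]
    exact hpack
  exact (Nat.cast_le.mpr (by exact_mod_cast hcard)).trans (Nat.floor_le (by positivity))

end Packing

section SparseSpheres

variable {ι : Type*}

def sphereSupportedOn (T : Finset ι) : Set (ι → ℝ) :=
  {c | (∀ j ∉ T, c j = 0) ∧ ∑ j ∈ T, c j ^ 2 = 1}

noncomputable def extendByZero (T : Finset ι) (p : EuclideanSpace ℝ T) : ι → ℝ :=
  Function.extend (↑) (p ·) 0

variable {S T : Finset ι}

theorem extendByZero_coe (p : EuclideanSpace ℝ T) (i : T) : extendByZero T p i = p i :=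
  Subtype.val_injective.extend_apply _ _ _

theorem extendByZero_of_notMem (p : EuclideanSpace ℝ T) {j : ι} (hj : j ∉ T) :
    extendByZero T p j = 0 :=
  Function.extend_apply' _ _ _ (by rintro ⟨i, rfl⟩; exact hj i.2)

theorem sum_sq_sub_extendByZero (p q : EuclideanSpace ℝ T) :
    ∑ j ∈ T, (extendByZero T p j - extendByZero T q j) ^ 2 = dist p q ^ 2 := by
  rw [EuclideanSpace.dist_eq, Real.sq_sqrt (by positivity), ← Finset.sum_coe_sort T]
  simp only [extendByZero_coe, Real.dist_eq, sq_abs]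

theorem exists_extendByZero_eq {c : ι → ℝ} (hc : ∀ j ∉ T, c j = 0) :
    ∃ p : EuclideanSpace ℝ T, extendByZero T p = c := by
  refine ⟨WithLp.toLp 2 fun i => c i, funext fun j => ?_⟩
  by_cases hj : j ∈ T
  · exact extendByZero_coe _ ⟨j, hj⟩
  · rw [extendByZero_of_notMem _ hj, hc j hj]

theorem sum_sq_extendByZero (p : EuclideanSpace ℝ T) :
    ∑ j ∈ T, extendByZero T p j ^ 2 = ‖p‖ ^ 2 := by
  rw [EuclideanSpace.norm_eq, Real.sq_sqrt (by positivity), ← Finset.sum_coe_sort T]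
  simp only [extendByZero_coe, Real.norm_eq_abs, sq_abs]

theorem extendByZero_mem_sphereSupportedOn_iff (p : EuclideanSpace ℝ T) :
    extendByZero T p ∈ sphereSupportedOn T ↔ p ∈ sphere 0 1 := by
  rw [mem_sphere_zero_iff_norm, ← pow_eq_one_iff_of_nonneg (norm_nonneg p) two_ne_zero,
    ← sum_sq_extendByZero]
  exact and_iff_right fun j => extendByZero_of_notMem p

theorem exists_finset_net_sphereSupportedOn (T : Finset ι) {ε : ℝ} (hε : 0 < ε) :
    ∃ P : Finset (ι → ℝ), ↑P ⊆ sphereSupportedOn T ∧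
      (∀ c ∈ sphereSupportedOn T, ∃ c' ∈ P, ∑ j ∈ T, (c j - c' j) ^ 2 ≤ ε ^ 2) ∧
      (P.card : ℝ) ≤ (1 + 2 / ε) ^ T.card := by
  obtain ⟨N, hNs, hNcover, hNcard⟩ :=
    exists_finset_isCover_sphere (E := EuclideanSpace ℝ T) (Real.toNNReal_pos.mpr hε)
  rw [finrank_euclideanSpace, Fintype.card_coe, Real.coe_toNNReal _ hε.le] at hNcard
  refine ⟨N.image (extendByZero T), ?_, ?_,
    (Nat.cast_le.mpr Finset.card_image_le).trans hNcard⟩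
  · rintro _ hc
    obtain ⟨p, hp, rfl⟩ := Finset.mem_image.mp hc
    exact (extendByZero_mem_sphereSupportedOn_iff p).mpr (hNs hp)
  · rintro c hc
    obtain ⟨p, rfl⟩ := exists_extendByZero_eq hc.1
    obtain ⟨q, hq, hpq⟩ := hNcover ((extendByZero_mem_sphereSupportedOn_iff p).mp hc)
    refine ⟨extendByZero T q, Finset.mem_image_of_mem _ hq, ?_⟩
    rw [sum_sq_sub_extendByZero]
    have hpq' : dist p q ≤ ε := (edist_le_ofReal hε.le).mp hpq
    gcongr

theorem Finset.card_le_sum_range_choose {S : Finset ι} {𝒯 : Finset (Finset ι)} {K : ℕ}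
    (h𝒯 : ∀ T ∈ 𝒯, T ⊆ S ∧ T.card ≤ K) :
    𝒯.card ≤ ∑ k ∈ Finset.range (K + 1), S.card.choose k := by
  calc 𝒯.card ≤ ((Finset.range (K + 1)).biUnion (S.powersetCard ·)).card :=
        Finset.card_le_card fun T hT => Finset.mem_biUnion.mpr
          ⟨T.card, Finset.mem_range.mpr (Nat.lt_succ_of_le (h𝒯 T hT).2),
            Finset.mem_powersetCard.mpr ⟨(h𝒯 T hT).1, rfl⟩⟩
    _ ≤ ∑ k ∈ Finset.range (K + 1), (S.powersetCard k).card := Finset.card_biUnion_le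
    _ = ∑ k ∈ Finset.range (K + 1), S.card.choose k := by simp only [Finset.card_powersetCard]

/-- The coefficient vectors `c` of the normalized elements `∑ c_j B_j` of `M_{ω,s} ∩ V_m`, where
`V_m = span {B_j : j ∈ S}`. -/
def weightedSparseSphere (S : Finset ι) (ω : ι → ℝ) (s : ℝ) : Set (ι → ℝ) :=
  {c | (∀ j ∉ S, c j = 0) ∧ ∑ j ∈ S, c j ^ 2 = 1 ∧ ∑ j ∈ S.filter (fun j => c j ≠ 0), ω j ^ 2 ≤ s}

variable {ω : ι → ℝ} {s : ℝ}

theorem mem_sphereSupportedOn_filter_ne_zero {c : ι → ℝ} (hc : c ∈ weightedSparseSphere S ω s) :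
    c ∈ sphereSupportedOn (S.filter (c · ≠ 0)) := by
  refine ⟨fun j hj => ?_, ?_⟩
  · by_cases hjS : j ∈ S
    · simpa [hjS] using hj
    · exact hc.1 j hjS
  · rw [← hc.2.1]
    exact Finset.sum_subset (Finset.filter_subset _ S) fun j hjS hj => by simp_all

theorem mem_weightedSparseSphere_of_mem_sphereSupportedOn (hTS : T ⊆ S)
    (hT : ∑ j ∈ T, ω j ^ 2 ≤ s) {c : ι → ℝ} (hc : c ∈ sphereSupportedOn T) :
    c ∈ weightedSparseSphere S ω s := by
  refine ⟨fun j hj => hc.1 j fun hjT => hj (hTS hjT), ?_, ?_⟩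
  · rw [← hc.2]
    exact (Finset.sum_subset hTS fun j _ hjT => by simp [hc.1 j hjT]).symm
  · refine le_trans (Finset.sum_le_sum_of_subset_of_nonneg (fun j hj => ?_)
      fun j _ _ => sq_nonneg _) hT
    by_contra hjT
    exact (Finset.mem_filter.mp hj).2 (hc.1 j hjT)

theorem card_le_floor_of_sum_sq_le (hω : ∀ j, 1 ≤ ω j ^ 2) (hT : ∑ j ∈ T, ω j ^ 2 ≤ s) :
    T.card ≤ ⌊s⌋₊ :=
  Nat.le_floor <| calc (T.card : ℝ) = ∑ _j ∈ T, (1 : ℝ) := by simp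
    _ ≤ ∑ j ∈ T, ω j ^ 2 := Finset.sum_le_sum fun j _ => hω j
    _ ≤ s := hT

theorem exists_finset_net_weightedSparseSphere (S : Finset ι) (hω : ∀ j, 1 ≤ ω j ^ 2) (s : ℝ)
    {ε : ℝ} (hε : 0 < ε) :
    ∃ F : Finset (ι → ℝ), ↑F ⊆ weightedSparseSphere S ω s ∧
      (∀ c ∈ weightedSparseSphere S ω s, ∃ c' ∈ F, ∃ T ⊆ S, ∑ j ∈ T, ω j ^ 2 ≤ s ∧
        (∀ j ∉ T, c j = c' j) ∧ ∑ j ∈ T, (c j - c' j) ^ 2 ≤ ε ^ 2) ∧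
      (F.card : ℝ) ≤
        (∑ k ∈ Finset.range (⌊s⌋₊ + 1), (S.card.choose k : ℝ)) * (1 + 2 / ε) ^ ⌊s⌋₊ := by
  set 𝒯 := S.powerset.filter fun T => ∑ j ∈ T, ω j ^ 2 ≤ s
  have mem_𝒯 {T : Finset ι} : T ∈ 𝒯 ↔ T ⊆ S ∧ ∑ j ∈ T, ω j ^ 2 ≤ s := by
    rw [Finset.mem_filter, Finset.mem_powerset]
  choose P hP hP_cover hP_card using fun T : Finset ι => exists_finset_net_sphereSupportedOn T hε
  refine ⟨𝒯.biUnion P, ?_, ?_, ?_⟩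
  · intro c hc
    obtain ⟨T, hT, hcT⟩ := Finset.mem_biUnion.mp hc
    exact mem_weightedSparseSphere_of_mem_sphereSupportedOn (mem_𝒯.mp hT).1 (mem_𝒯.mp hT).2
      (hP T hcT)
  · intro c hc
    have hsupp := mem_sphereSupportedOn_filter_ne_zero hc
    obtain ⟨c', hc'P, hcc'⟩ := hP_cover _ c hsupp
    refine ⟨c', Finset.mem_biUnion.mpr ⟨_, mem_𝒯.mpr ⟨Finset.filter_subset _ S, hc.2.2⟩, hc'P⟩,
      _, Finset.filter_subset _ S, hc.2.2, fun j hj => ?_, hcc'⟩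
    rw [hsupp.1 j hj, (hP _ hc'P).1 j hj]
  · have h1 : (1 : ℝ) ≤ 1 + 2 / ε := by simp only [le_add_iff_nonneg_right]; positivity
    have hcard : ∀ T ∈ 𝒯, T.card ≤ ⌊s⌋₊ := fun T hT =>
      card_le_floor_of_sum_sq_le hω (mem_𝒯.mp hT).2
    calc ((𝒯.biUnion P).card : ℝ) ≤ ∑ T ∈ 𝒯, ((P T).card : ℝ) := by
          exact_mod_cast Finset.card_biUnion_le
      _ ≤ ∑ T ∈ 𝒯, (1 + 2 / ε) ^ ⌊s⌋₊ := Finset.sum_le_sum fun T hT =>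
          (hP_card T).trans (pow_le_pow_right₀ h1 (hcard T hT))
      _ = 𝒯.card * (1 + 2 / ε) ^ ⌊s⌋₊ := by rw [Finset.sum_const, nsmul_eq_mul]
      _ ≤ _ := by
          gcongr
          exact_mod_cast Finset.card_le_sum_range_choose fun T hT => ⟨(mem_𝒯.mp hT).1, hcard T hT⟩

end SparseSpheres

theorem sum_range_choose_le_exp_mul_div_pow {m K : ℕ} (hK : 1 ≤ K) (hKm : K ≤ m) :
    ∑ k ∈ Finset.range (K + 1), (m.choose k : ℝ) ≤ (Real.exp 1 * m / K) ^ K := by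
  have hm : (0 : ℝ) < m := by exact_mod_cast hK.trans hKm
  set t : ℝ := K / m
  have ht0 : 0 < t := by positivity
  have ht1 : t ≤ 1 := div_le_one_of_le₀ (by exact_mod_cast hKm) hm.le
  have key : (∑ k ∈ Finset.range (K + 1), (m.choose k : ℝ)) * t ^ K ≤ Real.exp K :=
    calc (∑ k ∈ Finset.range (K + 1), (m.choose k : ℝ)) * t ^ K
        = ∑ k ∈ Finset.range (K + 1), (m.choose k : ℝ) * t ^ K := Finset.sum_mul ..
      _ ≤ ∑ k ∈ Finset.range (K + 1), (m.choose k : ℝ) * t ^ k := by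
          refine Finset.sum_le_sum fun k hk => mul_le_mul_of_nonneg_left ?_ (by positivity)
          exact pow_le_pow_of_le_one ht0.le ht1 (Nat.lt_succ_iff.mp (Finset.mem_range.mp hk))
      _ ≤ ∑ k ∈ Finset.range (m + 1), (m.choose k : ℝ) * t ^ k :=
          Finset.sum_le_sum_of_subset_of_nonneg (Finset.range_subset_range.mpr (by omega))
            fun _ _ _ => by positivity
      _ = (1 + t) ^ m := by
          rw [add_comm (1 : ℝ), add_pow]
          simp only [one_pow, mul_one, mul_comm]
      _ ≤ Real.exp t ^ m := by gcongr; linarith [Real.add_one_le_exp t]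
      _ = Real.exp K := by rw [← Real.exp_nat_mul]; congr 1; simp only [t]; field_simp
  calc ∑ k ∈ Finset.range (K + 1), (m.choose k : ℝ) ≤ Real.exp K / t ^ K :=
        (le_div_iff₀ (by positivity)).mpr key
    _ = (Real.exp 1 * m / K) ^ K := by
        rw [← Real.exp_one_pow, div_pow, div_pow, mul_pow]
        field_simp

theorem sum_range_choose_mul_pow_le {m : ℕ} {s r : ℝ} (hs : 1 ≤ s) (hsm : s ≤ m) (hr0 : 0 < r)
    (hr1 : r ≤ 1) :
    (∑ k ∈ Finset.range (⌊s⌋₊ + 1), (m.choose k : ℝ)) * (1 + 2 / (r / (2 * √s))) ^ ⌊s⌋₊ ≤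
      (33 * m / (r * √s)) ^ s := by
  set K := ⌊s⌋₊
  have hK : 1 ≤ K := Nat.le_floor (by exact_mod_cast hs)
  have hKs : (K : ℝ) ≤ s := Nat.floor_le (by linarith)
  have hKm : K ≤ m := by exact_mod_cast hKs.trans hsm
  have hs2K : s ≤ 2 * K := by
    have : (1 : ℝ) ≤ K := by exact_mod_cast hK
    linarith [Nat.lt_floor_add_one s]
  have hsq : 1 ≤ √s := Real.one_le_sqrt.mpr hs
  have hsqs : √s * √s = s := Real.mul_self_sqrt (by linarith)
  have hm : (0 : ℝ) < m := by linarith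
  have hnet : 1 + 2 / (r / (2 * √s)) ≤ 5 * √s / r :=
    calc 1 + 2 / (r / (2 * √s)) = 1 + 4 * √s / r := by field_simp; ring
      _ ≤ √s / r + 4 * √s / r := by gcongr; exact (one_le_div hr0).mpr (hr1.trans hsq)
      _ = 5 * √s / r := by ring
  have hbase : Real.exp 1 * m / K * (5 * √s / r) ≤ 33 * m / (r * √s) := by
    rw [div_mul_div_comm, div_le_div_iff₀ (by positivity) (by positivity)]
    have hK0 : (0 : ℝ) < K := by exact_mod_cast hK
    calc Real.exp 1 * m * (5 * √s) * (r * √s) = 5 * Real.exp 1 * s * (m * r) := by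
          linear_combination (5 * Real.exp 1 * m * r) * hsqs
      _ ≤ 30 * K * (m * r) := by
          refine mul_le_mul_of_nonneg_right ?_ (by positivity)
          nlinarith [Real.exp_one_lt_three, Real.exp_pos 1]
      _ ≤ 33 * m * (K * r) := by nlinarith [mul_pos hm hr0]
  have hone : 1 ≤ 33 * m / (r * √s) := by
    rw [one_le_div (by positivity)]
    nlinarith [mul_le_mul_of_nonneg_right hr1 (Real.sqrt_nonneg s),
      mul_le_mul_of_nonneg_left hsq (Real.sqrt_nonneg s)]
  calc (∑ k ∈ Finset.range (K + 1), (m.choose k : ℝ)) * (1 + 2 / (r / (2 * √s))) ^ K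
      ≤ (Real.exp 1 * m / K) ^ K * (5 * √s / r) ^ K := by
        gcongr
        exact sum_range_choose_le_exp_mul_div_pow hK hKm
    _ ≤ (33 * m / (r * √s)) ^ K := by rw [← mul_pow]; gcongr
    _ ≤ (33 * m / (r * √s)) ^ s := by
        rw [← Real.rpow_natCast]; exact Real.rpow_le_rpow_of_exponent_le hone hKs

section WeightedSup

variable {Y ι : Type*} [MeasurableSpace Y] {ρ : Measure Y} {w : Y → ℝ}

theorem one_le_essSup_mul_sq {f : Y → ℝ} (hf : ∫ y, f y * f y ∂ρ = 1) (hw : ∀ y, 0 < w y)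
    (hw_inv : ∫ y, (w y)⁻¹ ∂ρ = 1) :
    1 ≤ essSup (fun y => ENNReal.ofReal (w y * f y ^ 2)) ρ := by
  have lintegral_eq_one {g : Y → ℝ} (hg0 : ∀ y, 0 ≤ g y) (hg : ∫ y, g y ∂ρ = 1) :
      ∫⁻ y, ENNReal.ofReal (g y) ∂ρ = 1 := by
    rw [← ofReal_integral_eq_lintegral_ofReal (.of_integral_ne_zero (by simp [hg]))
      (ae_of_all _ hg0), hg, ENNReal.ofReal_one]
  have hw_inv_meas : AEMeasurable (fun y => (w y)⁻¹) ρ :=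
    (Integrable.of_integral_ne_zero (by simp [hw_inv])).aemeasurable
  calc (1 : ℝ≥0∞) = ∫⁻ y, ENNReal.ofReal (w y * f y ^ 2) * ENNReal.ofReal (w y)⁻¹ ∂ρ := by
        rw [← lintegral_eq_one (fun y => mul_self_nonneg (f y)) hf]
        refine lintegral_congr fun y => ?_
        rw [← ENNReal.ofReal_mul (by have := hw y; positivity)]
        field_simp [(hw y).ne']
    _ ≤ ∫⁻ y, essSup (fun y => ENNReal.ofReal (w y * f y ^ 2)) ρ * ENNReal.ofReal (w y)⁻¹ ∂ρ :=
        lintegral_mono_ae <| by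
          filter_upwards [ENNReal.ae_le_essSup fun y => ENNReal.ofReal (w y * f y ^ 2)] with y hy
          exact mul_le_mul_left hy _
    _ = essSup (fun y => ENNReal.ofReal (w y * f y ^ 2)) ρ := by
        rw [lintegral_const_mul'' _ hw_inv_meas.ennreal_ofReal,
          lintegral_eq_one (fun y => (inv_pos.mpr (hw y)).le) hw_inv, mul_one]

theorem mul_sq_sum_le {T : Finset ι} {a : ℝ} (ha : 0 ≤ a) {b ω : ι → ℝ}
    (h : ∀ j ∈ T, a * b j ^ 2 ≤ ω j ^ 2) (d : ι → ℝ) :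
    a * (∑ j ∈ T, d j * b j) ^ 2 ≤ (∑ j ∈ T, ω j ^ 2) * ∑ j ∈ T, d j ^ 2 := by
  calc a * (∑ j ∈ T, d j * b j) ^ 2 ≤ a * ((∑ j ∈ T, d j ^ 2) * ∑ j ∈ T, b j ^ 2) :=
        mul_le_mul_of_nonneg_left (Finset.sum_mul_sq_le_sq_mul_sq T d b) ha
    _ = (∑ j ∈ T, a * b j ^ 2) * ∑ j ∈ T, d j ^ 2 := by rw [← Finset.mul_sum]; ring
    _ ≤ (∑ j ∈ T, ω j ^ 2) * ∑ j ∈ T, d j ^ 2 := by gcongr with j hj; exact h j hj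

theorem essSup_mul_sq_sum_le {T : Finset ι} (hw : ∀ y, 0 ≤ w y) {B : ι → Y → ℝ}
    {ω : ι → ℝ} (hB : ∀ j ∈ T, essSup (fun y => ENNReal.ofReal (w y * B j y ^ 2)) ρ ≤
      ENNReal.ofReal (ω j ^ 2)) (d : ι → ℝ) :
    essSup (fun y => ENNReal.ofReal (w y * (∑ j ∈ T, d j * B j y) ^ 2)) ρ ≤
      ENNReal.ofReal ((∑ j ∈ T, ω j ^ 2) * ∑ j ∈ T, d j ^ 2) := by
  refine essSup_le_of_ae_le _ ?_
  have hB_ae : ∀ᵐ y ∂ρ, ∀ j ∈ T, w y * B j y ^ 2 ≤ ω j ^ 2 :=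
    (Filter.eventually_all_finset T).mpr fun j hj => by
      filter_upwards [ENNReal.ae_le_essSup (fun y => ENNReal.ofReal (w y * B j y ^ 2))] with y hy
      exact (ENNReal.ofReal_le_ofReal_iff (sq_nonneg _)).mp (hy.trans (hB j hj))
  filter_upwards [hB_ae] with y hy
  exact ENNReal.ofReal_le_ofReal (mul_sq_sum_le (hw y) hy d)

theorem essSup_mul_sq_sum_sub_sum_le {S T : Finset ι} (hTS : T ⊆ S) {c c' : ι → ℝ}
    (hcc' : ∀ j ∉ T, c j = c' j) (hw : ∀ y, 0 ≤ w y) {B : ι → Y → ℝ} {ω : ι → ℝ}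
    (hB : ∀ j ∈ T, essSup (fun y => ENNReal.ofReal (w y * B j y ^ 2)) ρ ≤
      ENNReal.ofReal (ω j ^ 2)) :
    essSup (fun y => ENNReal.ofReal (w y * (∑ j ∈ S, c j * B j y - ∑ j ∈ S, c' j * B j y) ^ 2)) ρ ≤
      ENNReal.ofReal ((∑ j ∈ T, ω j ^ 2) * ∑ j ∈ T, (c j - c' j) ^ 2) := by
  have hsub (y : Y) : ∑ j ∈ S, c j * B j y - ∑ j ∈ S, c' j * B j y =
      ∑ j ∈ T, (c j - c' j) * B j y := by
    simp only [← Finset.sum_sub_distrib, ← sub_mul]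
    exact (Finset.sum_subset hTS fun j _ hjT => by rw [hcc' j hjT, sub_self, zero_mul]).symm
  simp only [hsub]
  exact essSup_mul_sq_sum_le hw hB _

end WeightedSup

/-- (Lemma 4.7: covering numbers of weighted-sparse sets.) There is
a universal constant `C > 0` such that for any `m`-dimensional space `V_m` spanned by
basis functions `B_j`, `j ∈ S`, any `1 ≤ s ≤ m` and any radius `r ∈ (0,1]`, the
normalized set `U(M_{ω,s} ∩ V_m)` admits a `‖·‖_{w,∞}`-covering by `N` balls of radius
`r`, centered in the set, with `N ≤ (C m/(r √s))^s`. -/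
theorem weighted_sparse_covering_number :
    ∃ C : ℝ, 0 < C ∧
      ∀ (Y : Type) [MeasurableSpace Y] (ρ : Measure Y) [IsProbabilityMeasure ρ]
        (B : ℕ → Y → ℝ), (∀ j, Measurable (B j)) →
        (∀ i j, ∫ y, B i y * B j y ∂ρ = if i = j then 1 else 0) →
        ∀ w : Y → ℝ, Measurable w → (∀ y, 0 < w y) → (∫ y, (w y)⁻¹ ∂ρ = 1) →
        ∀ ω : ℕ → ℝ, (∀ j, 0 ≤ ω j) →
        (∀ j, essSup (fun y => ENNReal.ofReal (w y * B j y ^ 2)) ρ ≤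
          ENNReal.ofReal (ω j ^ 2)) →
        ∀ (S : Finset ℕ) (m : ℕ), S.card = m →
        ∀ s : ℝ, 1 ≤ s → s ≤ (m : ℝ) →
        ∀ r : ℝ, 0 < r → r ≤ 1 →
        -- UA is the normalized set U(M_{ω,s} ∩ V_m)
        ∀ UA : Set (Y → ℝ), UA = {f | ∃ c : ℕ → ℝ,
            (∀ j ∉ S, c j = 0) ∧ (∑ j ∈ S, c j ^ 2 = 1) ∧
            (∑ j ∈ S.filter (fun j => c j ≠ 0), ω j ^ 2 ≤ s) ∧
            f = fun y => ∑ j ∈ S, c j * B j y} →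
          ∃ (N : ℕ) (cent : Fin N → Y → ℝ),
            (∀ i, cent i ∈ UA) ∧
            (∀ f ∈ UA, ∃ i,
              essSup (fun y => ENNReal.ofReal (w y * (f y - cent i y) ^ 2)) ρ <
                ENNReal.ofReal (r ^ 2)) ∧
            (N : ℝ) ≤ (C * m / (r * Real.sqrt s)) ^ s := by
  refine ⟨33, by norm_num, ?_⟩
  intro Y _ ρ _ B _ hB w _ hw hw_inv ω _ hωB S m rfl s hs hsm r hr0 hr1 UA rfl
  have hω : ∀ j, 1 ≤ ω j ^ 2 := fun j => ENNReal.one_le_ofReal.mp <|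
    (one_le_essSup_mul_sq (by simpa using hB j j) hw hw_inv).trans (hωB j)
  obtain ⟨F, hF, hF_cover, hF_card⟩ :=
    exists_finset_net_weightedSparseSphere S hω s (ε := r / (2 * √s)) (by positivity)
  let synth (c : ℕ → ℝ) (y : Y) : ℝ := ∑ j ∈ S, c j * B j y
  refine ⟨F.card, fun i => synth (F.equivFin.symm i), fun i => ?_, ?_,
    hF_card.trans (sum_range_choose_mul_pow_le hs hsm hr0 hr1)⟩
  · obtain ⟨h₁, h₂, h₃⟩ := hF (F.equivFin.symm i).2
    exact ⟨_, h₁, h₂, h₃, rfl⟩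
  rintro _ ⟨c, h₁, h₂, h₃, rfl⟩
  obtain ⟨c', hc'F, T, hTS, hTs, hcc', hdist⟩ := hF_cover c ⟨h₁, h₂, h₃⟩
  refine ⟨F.equivFin ⟨c', hc'F⟩, ?_⟩
  simp only [Equiv.symm_apply_apply, synth]
  refine (essSup_mul_sq_sum_sub_sum_le hTS hcc' (fun y => (hw y).le) fun j _ => hωB j).trans_lt ?_
  rw [ENNReal.ofReal_lt_ofReal_iff (by positivity)]
  have hsε : s * (r / (2 * √s)) ^ 2 = r ^ 2 / 4 := by
    rw [div_pow, mul_pow, Real.sq_sqrt (by linarith)]; field_simp; ring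
  nlinarith [Finset.sum_nonneg fun j (_ : j ∈ T) => sq_nonneg (c j - c' j)]
end

section
/- Let m ∈ ℕ, ω ∈ (0,∞)^m, and s > 0. For v ∈ ℝ^m set ‖v‖_{ω,0} := Σ_{j ∈ supp(v)} ω_j² and M := {v ∈ ℝ^m : ‖v‖_{ω,0} ≤ s}. Then for every b ∈ ℝ^m and every v ∈ M with v ≠ 0, one has ⟨v, b⟩² / ‖v‖₂² ≤ s · max_{1≤j≤m} (b_j/ω_j)². In particular, the pointwise quantity b̂ := sup{⟨v, b⟩²/‖v‖₂² : v ∈ M, v ≠ 0} satisfies b̂ ≤ s ‖Ω^{-1} b‖_∞², where Ω := diag(ω). -/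
open scoped Classical

/-!
Only the coordinates in the support of `v` contribute to `⟨v, b⟩`. Writing each term as
`ω j · (v j b j / ω j)` and applying Cauchy–Schwarz on the support gives
`⟨v, b⟩² ≤ ‖v‖_{ω,0} · ∑ v j² (b j / ω j)²`, and the last sum is at most
`max_j (b j / ω j)² · ‖v‖₂²`.
-/

open Finset

variable {ι : Type*} [Fintype ι]

/-- The weighted sparsity `‖v‖_{ω,0}`. -/
noncomputable def weightedSparsity (ω v : ι → ℝ) : ℝ :=
  ∑ j ∈ univ.filter (fun j => v j ≠ 0), ω j ^ 2

lemma weightedSparsity_nonneg (ω v : ι → ℝ) : 0 ≤ weightedSparsity ω v :=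
  sum_nonneg fun j _ => sq_nonneg (ω j)

lemma sq_sum_mul_le_weightedSparsity_mul {ω : ι → ℝ} (hω : ∀ j, ω j ≠ 0) (v b : ι → ℝ) :
    (∑ j, v j * b j) ^ 2 ≤ weightedSparsity ω v * ∑ j, v j ^ 2 * (b j / ω j) ^ 2 := by
  set S := univ.filter (fun j => v j ≠ 0)
  have on_support : ∑ j, v j * b j = ∑ j ∈ S, ω j * (v j * (b j / ω j)) := by
    rw [← sum_filter_of_ne fun j _ h => left_ne_zero_of_mul h]
    refine sum_congr rfl fun j _ => ?_
    field_simp [hω j]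
  have drop_support : ∑ j ∈ S, (v j * (b j / ω j)) ^ 2 ≤ ∑ j, v j ^ 2 * (b j / ω j) ^ 2 := by
    simp_rw [← mul_pow]
    exact sum_le_sum_of_subset_of_nonneg (subset_univ S) fun j _ _ => sq_nonneg _
  calc (∑ j, v j * b j) ^ 2
      ≤ (∑ j ∈ S, ω j ^ 2) * ∑ j ∈ S, (v j * (b j / ω j)) ^ 2 := by
        rw [on_support]; exact sum_mul_sq_le_sq_mul_sq S ω _
    _ ≤ weightedSparsity ω v * ∑ j, v j ^ 2 * (b j / ω j) ^ 2 :=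
        mul_le_mul_of_nonneg_left drop_support (weightedSparsity_nonneg ω v)

lemma sum_mul_le_iSup_mul_sum {a : ι → ℝ} (ha : ∀ j, 0 ≤ a j) (c : ι → ℝ) :
    ∑ j, a j * c j ≤ (⨆ j, c j) * ∑ j, a j := by
  rw [mul_sum]
  refine sum_le_sum fun j _ => ?_
  rw [mul_comm]
  exact mul_le_mul_of_nonneg_right (le_ciSup (Set.finite_range c).bddAbove j) (ha j)

theorem weighted_sparse_pointwise_bound_general
    (m : ℕ) (ω : Fin m → ℝ) (hω : ∀ j, 0 < ω j)
    (s : ℝ) (b : Fin m → ℝ)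
    (v : Fin m → ℝ)
    (hv_sparse : ∑ j ∈ Finset.univ.filter (fun j => v j ≠ 0), ω j ^ 2 ≤ s) :
    (∑ j, v j * b j) ^ 2 / (∑ j, v j ^ 2) ≤ s * (⨆ j, (b j / ω j) ^ 2) := by
  have hs : 0 ≤ s := (weightedSparsity_nonneg ω v).trans hv_sparse
  have hsup : 0 ≤ ⨆ j, (b j / ω j) ^ 2 := Real.iSup_nonneg fun j => sq_nonneg _
  refine div_le_of_le_mul₀ (sum_nonneg fun j _ => sq_nonneg (v j)) (mul_nonneg hs hsup) ?_
  calc (∑ j, v j * b j) ^ 2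
      ≤ weightedSparsity ω v * ∑ j, v j ^ 2 * (b j / ω j) ^ 2 :=
        sq_sum_mul_le_weightedSparsity_mul (fun j => (hω j).ne') v b
    _ ≤ s * ((⨆ j, (b j / ω j) ^ 2) * ∑ j, v j ^ 2) :=
        mul_le_mul hv_sparse (sum_mul_le_iSup_mul_sum (fun j => sq_nonneg (v j)) _)
          (sum_nonneg fun j _ => by positivity) hs
    _ = s * (⨆ j, (b j / ω j) ^ 2) * ∑ j, v j ^ 2 := by ring

/-- (Lemma 4.11 / pointwise bound for weighted-sparse vectors.)
For `v` in the weighted-sparse model class `M = {v : ‖v‖_{ω,0} ≤ s}`,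
`⟨v, b⟩²/‖v‖₂² ≤ s · max_j (b_j/ω_j)²`; in particular the pointwise supremum
`b̂ = sup_{v ∈ M, v ≠ 0} ⟨v,b⟩²/‖v‖₂²` satisfies `b̂ ≤ s ‖Ω⁻¹b‖_∞²`. -/
theorem weighted_sparse_pointwise_bound
    (m : ℕ) (ω : Fin m → ℝ) (hω : ∀ j, 0 < ω j)
    (s : ℝ) (hs : 0 < s) (b : Fin m → ℝ)
    (v : Fin m → ℝ) (hv : v ≠ 0)
    (hv_sparse : ∑ j ∈ Finset.univ.filter (fun j => v j ≠ 0), ω j ^ 2 ≤ s) :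
    (∑ j, v j * b j) ^ 2 / (∑ j, v j ^ 2) ≤ s * (⨆ j, (b j / ω j) ^ 2) :=
  weighted_sparse_pointwise_bound_general m ω hω s b v hv_sparse
end

section
/- Let M, m ≥ 1 be integers and let V be the space of real tensors of order M and size m in each mode, i.e. functions v : ({1,…,m})^M → ℝ, equipped with the Frobenius inner product ⟨v, y⟩_F := Σ_{i ∈ ({1,…,m})^M} v_i y_i and Frobenius norm ‖·‖_F. Let T_1 := {v ∈ V : there exist u^{(1)},…,u^{(M)} ∈ ℝ^m with v_i = Π_{k=1}^M u^{(k)}_{i_k} for all i} be the set of elementary (rank-one) tensors. Let ρ be a probability measure on V such that ρ-almost every y lies in T_1, let w : V → (0,∞) be measurable with ∫ w^{-1} dρ = 1, and define the seminorms |v|_y := |⟨v, y⟩_F| and the norm ‖v‖ := (∫_V ⟨v, y⟩_F² dρ(y))^{1/2}; assume there is c > 0 with ‖v‖ = c ‖v‖_F for all v ∈ V. Then for every set A with T_1 ⊆ A ⊆ V one has K(U(A)) = K(U(V)), where U(A) := {v/‖v‖ : v ∈ A, v ≠ 0} and K(A') := sup_{v ∈ A'} esssup_{y ∈ V} w(y)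 ⟨v, y⟩_F². -/
open MeasureTheory ENNReal

/-!
By Cauchy–Schwarz, every `u` with `‖u‖ = 1` satisfies `w y ⟨u, y⟩² ≤ w y ⟨y / ‖y‖, y⟩²`, and
for `ρ`-almost every `y` the maximiser `y / ‖y‖` lies in `U(A)`, because `y ∈ T₁ ⊆ A`. The
supremum over `U(A)` may be pulled inside the essential supremum over `y` because `U(A)` is
separable and the integrand is continuous in `u`.
-/

open TopologicalSpace in
theorem ae_biSup_le_biSup_essSup {X α : Type*} [TopologicalSpace X]
    [PseudoMetrizableSpace X] [MeasurableSpace α] (μ : Measure α) {S : Set X}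
    (hS : IsSeparable S) {g : X → α → ℝ≥0∞} (hg : ∀ y, LowerSemicontinuous fun v => g v y) :
    ∀ᵐ y ∂μ, ⨆ v ∈ S, g v y ≤ ⨆ v ∈ S, essSup (g v) μ := by
  obtain ⟨D, hDS, hDc, hSD⟩ := hS.exists_countable_dense_subset
  have hD : ∀ᵐ y ∂μ, ∀ v ∈ D, g v y ≤ ⨆ v ∈ S, essSup (g v) μ := by
    rw [ae_ball_iff hDc]
    exact fun v hv => (ae_le_essSup (g v)).mono fun y hy =>
      hy.trans (le_biSup (fun v => essSup (g v) μ) (hDS hv))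
  filter_upwards [hD] with y hy
  exact iSup₂_le fun v hv =>
    ((hg y).isClosed_preimage _).closure_subset_iff.2 hy (hSD hv)

theorem sq_sum_mul_le_sq_sum_smul_mul {ι : Type*} [Fintype ι] {u y : ι → ℝ} {a : ℝ}
    (h : ∑ i, u i ^ 2 = ∑ i, (a • y) i ^ 2) :
    (∑ i, u i * y i) ^ 2 ≤ (∑ i, (a • y) i * y i) ^ 2 :=
  calc (∑ i, u i * y i) ^ 2 ≤ (∑ i, u i ^ 2) * ∑ i, y i ^ 2 :=
        Finset.sum_mul_sq_le_sq_mul_sq _ _ _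
    _ = (∑ i, (a • y) i * y i) ^ 2 := by
        simp only [h, Pi.smul_apply, smul_eq_mul, mul_pow, mul_assoc, ← sq,
          ← Finset.mul_sum]

theorem sum_sq_inv_mul_sqrt_smul {ι : Type*} [Fintype ι] {v : ι → ℝ} (hv : v ≠ 0) (c : ℝ) :
    ∑ i, ((c * √(∑ j, v j ^ 2))⁻¹ • v) i ^ 2 = (c ^ 2)⁻¹ := by
  obtain ⟨i, hi⟩ := Function.ne_iff.mp hv
  have hs : 0 < ∑ j, v j ^ 2 :=
    Finset.sum_pos' (fun j _ => sq_nonneg _) ⟨i, Finset.mem_univ _, pow_two_pos_of_ne_zero hi⟩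
  simp only [Pi.smul_apply, smul_eq_mul, mul_pow, ← Finset.mul_sum, inv_pow,
    Real.sq_sqrt hs.le, mul_inv, mul_assoc, inv_mul_cancel₀ hs.ne', mul_one]

theorem tensor_rank_one_variation_constant_general
    (M m : ℕ)
    (ρ : Measure ((Fin M → Fin m) → ℝ))
    -- the set of elementary (rank-one) tensors
    (T1 : Set ((Fin M → Fin m) → ℝ))
    (hρ_rank1 : ∀ᵐ y ∂ρ, y ∈ T1)
    -- the weight function
    (w : ((Fin M → Fin m) → ℝ) → ℝ) (hw_pos : ∀ y, 0 < w y)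
    -- the Frobenius inner product and the induced norm ‖v‖ = (∫ ⟨v,y⟩² dρ(y))^{1/2}
    (dot : ((Fin M → Fin m) → ℝ) → ((Fin M → Fin m) → ℝ) → ℝ)
    (hdot : ∀ v y, dot v y = ∑ i, v i * y i)
    (Nrm : ((Fin M → Fin m) → ℝ) → ℝ)
    -- ‖·‖ is a multiple of the Frobenius norm
    (c : ℝ)
    (hiso : ∀ v, Nrm v = c * Real.sqrt (∑ i, v i ^ 2))
    -- the model class A with T₁ ⊆ A
    (A : Set ((Fin M → Fin m) → ℝ)) (hA : T1 ⊆ A)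
    -- the variation constant K(·) (of a normalized set)
    (K : Set ((Fin M → Fin m) → ℝ) → ℝ≥0∞)
    (hK : ∀ A' : Set ((Fin M → Fin m) → ℝ),
      K A' = ⨆ v ∈ A', essSup (fun y => ENNReal.ofReal (w y * dot v y ^ 2)) ρ) :
    K {u | ∃ v ∈ A, v ≠ 0 ∧ u = (Nrm v)⁻¹ • v} =
      K {u | ∃ v : (Fin M → Fin m) → ℝ, v ≠ 0 ∧ u = (Nrm v)⁻¹ • v} := by
  obtain rfl : dot = fun v y => ∑ i, v i * y i := funext₂ hdot
  obtain rfl : Nrm = fun v => c * √(∑ i, v i ^ 2) := funext hiso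
  beta_reduce at hK ⊢
  set UA := {u | ∃ v ∈ A, v ≠ 0 ∧ u = (c * √(∑ i, v i ^ 2))⁻¹ • v}
  have hUA : UA ⊆ {u | ∃ v, v ≠ 0 ∧ u = (c * √(∑ i, v i ^ 2))⁻¹ • v} := by
    rintro u ⟨v, -, hv, rfl⟩
    exact ⟨v, hv, rfl⟩
  have hcont (y : (Fin M → Fin m) → ℝ) :
      LowerSemicontinuous fun u : (Fin M → Fin m) → ℝ =>
        ENNReal.ofReal (w y * (∑ i, u i * y i) ^ 2) :=
    (ENNReal.continuous_ofReal.comp (by fun_prop)).lowerSemicontinuous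
  rw [hK, hK]
  refine le_antisymm (biSup_mono hUA) (iSup₂_le ?_)
  rintro _ ⟨v, hv, rfl⟩
  refine essSup_le_of_ae_le _ ?_
  filter_upwards [ae_biSup_le_biSup_essSup ρ (.of_separableSpace UA) hcont, hρ_rank1]
    with y hy hyT
  rcases eq_or_ne y 0 with rfl | hy0
  · simp
  have hyA : (c * √(∑ j, y j ^ 2))⁻¹ • y ∈ UA := ⟨y, hA hyT, hy0, rfl⟩
  calc _ ≤ ENNReal.ofReal (w y * (∑ i, ((c * √(∑ j, y j ^ 2))⁻¹ • y) i * y i) ^ 2) := by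
        gcongr ENNReal.ofReal (w y * ?_)
        · exact (hw_pos y).le
        exact sq_sum_mul_le_sq_sum_smul_mul <| by
          rw [sum_sq_inv_mul_sqrt_smul hv, sum_sq_inv_mul_sqrt_smul hy0]
    _ ≤ ⨆ u ∈ UA, ENNReal.ofReal (w y * (∑ i, u i * y i) ^ 2) :=
        le_iSup₂ (f := fun u (_ : u ∈ UA) => ENNReal.ofReal (w y * (∑ i, u i * y i) ^ 2)) _ hyA
    _ ≤ _ := hy

/-- (Theorem 4.9: rank-one measurements of low-rank tensors.) If
`ρ`-almost every measurement tensor `y` has rank one and the norm induced by the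
measurements is a multiple of the Frobenius norm, then every set `A` of tensors with
`T₁ ⊆ A ⊆ V` has the same variation constant as the full tensor space:
`K(U(A)) = K(U(V))`. -/
theorem tensor_rank_one_variation_constant
    (M m : ℕ) (hM : 0 < M) (hm : 0 < m)
    (ρ : Measure ((Fin M → Fin m) → ℝ)) [IsProbabilityMeasure ρ]
    -- the set of elementary (rank-one) tensors
    (T1 : Set ((Fin M → Fin m) → ℝ))
    (hT1 : T1 = {v | ∃ u : Fin M → Fin m → ℝ, ∀ i, v i = ∏ k, u k (i k)})
    (hρ_rank1 : ∀ᵐ y ∂ρ, y ∈ T1)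
    -- the weight function
    (w : ((Fin M → Fin m) → ℝ) → ℝ) (hw_meas : Measurable w) (hw_pos : ∀ y, 0 < w y)
    (hw_int : ∫ y, (w y)⁻¹ ∂ρ = 1)
    -- the Frobenius inner product and the induced norm ‖v‖ = (∫ ⟨v,y⟩² dρ(y))^{1/2}
    (dot : ((Fin M → Fin m) → ℝ) → ((Fin M → Fin m) → ℝ) → ℝ)
    (hdot : ∀ v y, dot v y = ∑ i, v i * y i)
    (Nrm : ((Fin M → Fin m) → ℝ) → ℝ)
    (hNrm : ∀ v, Nrm v = Real.sqrt (∫ y, dot v y ^ 2 ∂ρ))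
    -- ‖·‖ is a multiple of the Frobenius norm
    (c : ℝ) (hc : 0 < c)
    (hiso : ∀ v, Nrm v = c * Real.sqrt (∑ i, v i ^ 2))
    -- the model class A with T₁ ⊆ A
    (A : Set ((Fin M → Fin m) → ℝ)) (hA : T1 ⊆ A)
    -- the variation constant K(·) (of a normalized set)
    (K : Set ((Fin M → Fin m) → ℝ) → ℝ≥0∞)
    (hK : ∀ A' : Set ((Fin M → Fin m) → ℝ),
      K A' = ⨆ v ∈ A', essSup (fun y => ENNReal.ofReal (w y * dot v y ^ 2)) ρ) :
    K {u | ∃ v ∈ A, v ≠ 0 ∧ u = (Nrm v)⁻¹ • v} =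
      K {u | ∃ v : (Fin M → Fin m) → ℝ, v ≠ 0 ∧ u = (Nrm v)⁻¹ • v} :=
  tensor_rank_one_variation_constant_general M m ρ T1 hρ_rank1 w hw_pos dot hdot Nrm c hiso A hA K
    hK
end
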